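/- arXiv:1403.1473 — 8 statements merged into one kernel-verified Lean document; each statement's English description precedes it below -/
import Mathlib

section
/- For every integer N ≥ 1 and every convex w : {0,…,N} → ℝ, the fundamental gap of the hypercube Jacobi matrix satisfies Γ(J_w) = λ_2 − λ_1 ≥ 2. -/
/-- The hypercube Jacobi matrix `J_w`: the `(N+1) × (N+1)` real symmetric matrix with
diagonal entries `N + w m` and off-diagonal entries `-h(m)` with `h(m) = √((m+1)(N-m))`. -/
noncomputable def hypJ (N : ℕ) (w : ℕ → ℝ) : Matrix (Fin (N + 1)) (Fin (N + 1)) ℝ :=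
  Matrix.of fun i j =>
    if i = j then (N : ℝ) + w (i : ℕ)
    else if (i : ℕ) + 1 = (j : ℕ) then
      -Real.sqrt (((i : ℕ) + 1) * ((N : ℝ) - (i : ℕ)))
    else if (j : ℕ) + 1 = (i : ℕ) then
      -Real.sqrt (((j : ℕ) + 1) * ((N : ℝ) - (j : ℕ)))
    else 0

/-- `μ` is an eigenvalue of the real matrix `A`. -/
def IsEigen {n : ℕ} (A : Matrix (Fin n) (Fin n) ℝ) (μ : ℝ) : Prop :=
  ∃ v : Fin n → ℝ, v ≠ 0 ∧ A.mulVec v = μ • v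

/-- `l1 < l2` are the two smallest eigenvalues of `A`. -/
def TwoSmallest {n : ℕ} (A : Matrix (Fin n) (Fin n) ℝ) (l1 l2 : ℝ) : Prop :=
  IsEigen A l1 ∧ IsEigen A l2 ∧ l1 < l2 ∧
    ∀ μ, IsEigen A μ → l1 ≤ μ ∧ (μ ≠ l1 → l2 ≤ μ)

/-!
Conjugating `J_w - λ₁` by the positive ground state `x` (Perron–Frobenius) turns it into minus
the generator of a birth–death chain on `{0, …, N}`, with up-rates `(N - m) u_m` and down-rates
`m / u_{m-1}`, where `u_m = h(m) x_{m+1} / ((N - m) x_m)`. The ground-state equation says that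
the total jump rate at `m` is `N + w_m - λ₁`, hence convex in `m`, and this forces `u` to be
nonincreasing. The second eigenvector `y` gives an eigenfunction `G = y / x` of the chain with
eigenvalue `λ₂ - λ₁`; at a maximum of `|G_{m+1} - G_m|` the equation for the discrete
derivative gives `λ₂ - λ₁ ≥ u_m + 1 / u_m ≥ 2`.
-/

open Matrix Set

namespace Matrix

variable {n : ℕ} {A : Matrix (Fin n) (Fin n) ℝ} {l : ℝ}

lemma IsHermitian.posSemidef_sub_smul_one (hA : A.IsHermitian)
    (hl : ∀ μ, IsEigen A μ → l ≤ μ) : (A - l • 1).PosSemidef := by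
  have hB : (A - l • 1).IsHermitian := hA.sub (isHermitian_one.smul (IsSelfAdjoint.all l))
  refine hB.posSemidef_iff_eigenvalues_nonneg.2 fun i => ?_
  have hv := hB.mulVec_eigenvectorBasis i
  rw [sub_mulVec, smul_mulVec, one_mulVec, sub_eq_iff_eq_add, ← add_smul] at hv
  have hne : ⇑(hB.eigenvectorBasis i) ≠ 0 := fun h =>
    hB.eigenvectorBasis.orthonormal.ne_zero i (by ext k; exact congrFun h k)
  have := hl _ ⟨_, hne, hv⟩
  simp only [Pi.zero_apply]
  linarith

lemma PosSemidef.mulVec_abs_eq_zero {ι : Type*} [Fintype ι] {B : Matrix ι ι ℝ}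
    (hB : B.PosSemidef) (hoff : ∀ i j, i ≠ j → B i j ≤ 0) {v : ι → ℝ}
    (hv : B *ᵥ v = 0) : B *ᵥ |v| = 0 := by
  have hquad (z : ι → ℝ) : z ⬝ᵥ B *ᵥ z = ∑ i, ∑ j, B i j * (z i * z j) := by
    simp only [dotProduct, mulVec, Finset.mul_sum]
    exact Finset.sum_congr rfl fun i _ => Finset.sum_congr rfl fun j _ => by ring
  have hle : |v| ⬝ᵥ B *ᵥ |v| ≤ v ⬝ᵥ B *ᵥ v := by
    rw [hquad, hquad]
    refine Finset.sum_le_sum fun i _ => Finset.sum_le_sum fun j _ => ?_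
    rcases eq_or_ne i j with rfl | hij
    · simp [abs_mul_abs_self]
    · refine mul_le_mul_of_nonpos_left ?_ (hoff i j hij)
      simpa [abs_mul] using le_abs_self (v i * v j)
  refine (hB.dotProduct_mulVec_zero_iff |v|).1 (le_antisymm ?_ ?_)
  · simpa [hv] using hle
  · exact hB.dotProduct_mulVec_nonneg _

lemma IsHermitian.exists_nonneg_eigenvector (hA : A.IsHermitian)
    (hoff : ∀ i j, i ≠ j → A i j ≤ 0) (hl : IsEigen A l)
    (hmin : ∀ μ, IsEigen A μ → l ≤ μ) :
    ∃ x, 0 ≤ x ∧ x ≠ 0 ∧ A *ᵥ x = l • x := by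
  obtain ⟨v, hv0, hv⟩ := hl
  have hBv : (A - l • 1) *ᵥ v = 0 := by rw [sub_mulVec, hv, smul_mulVec, one_mulVec, sub_self]
  have hBoff : ∀ i j, i ≠ j → (A - l • 1) i j ≤ 0 := fun i j hij => by
    simpa [one_apply_ne hij] using hoff i j hij
  have := (hA.posSemidef_sub_smul_one hmin).mulVec_abs_eq_zero hBoff hBv
  rw [sub_mulVec, smul_mulVec, one_mulVec, sub_eq_zero] at this
  exact ⟨|v|, abs_nonneg v, fun h => hv0 ((Pi.abs_eq_zero v).1 h), this⟩

end Matrix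

namespace HypercubeGap

/-- `hop N m` is the paper's `h(m - 1)`, the amplitude between Hamming weights `m - 1` and `m`;
it vanishes at `m = 0` and `m = N + 1`, so the boundary rows need no special treatment. -/
noncomputable def hop (N m : ℕ) : ℝ := √(m * ((N : ℝ) + 1 - m))

@[simp] lemma hop_zero (N : ℕ) : hop N 0 = 0 := by simp [hop]

@[simp] lemma hop_succ_self (N : ℕ) : hop N (N + 1) = 0 := by simp [hop]

lemma hop_nonneg (N m : ℕ) : 0 ≤ hop N m := Real.sqrt_nonneg _

lemma hop_pos {N m : ℕ} (h0 : 0 < m) (hm : m ≤ N) : 0 < hop N m := by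
  have : (m : ℝ) ≤ N := by exact_mod_cast hm
  exact Real.sqrt_pos.2 (mul_pos (by exact_mod_cast h0) (by linarith))

lemma hop_sq {N m : ℕ} (hm : m ≤ N + 1) : hop N m ^ 2 = m * ((N : ℝ) + 1 - m) := by
  have : (m : ℝ) ≤ N + 1 := by exact_mod_cast hm
  exact Real.sq_sqrt (mul_nonneg (Nat.cast_nonneg m) (by linarith))

def extendByZero {n : ℕ} (y : Fin n → ℝ) (m : ℕ) : ℝ :=
  if h : m < n then y ⟨m, h⟩ else 0

lemma extendByZero_apply {n : ℕ} (y : Fin n → ℝ) (i : Fin n) : extendByZero y i = y i :=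
  dif_pos i.isLt

noncomputable def jacobiRow (N : ℕ) (w f : ℕ → ℝ) (m : ℕ) : ℝ :=
  (N + w m) * f m - hop N m * f (m - 1) - hop N (m + 1) * f (m + 1)

lemma hypJ_apply (N : ℕ) (w : ℕ → ℝ) (i j : Fin (N + 1)) :
    hypJ N w i j = (if (j : ℕ) = i then N + w i else 0)
      - (if (j : ℕ) + 1 = i then hop N i else 0)
      - (if (j : ℕ) = i + 1 then hop N j else 0) := by
  obtain ⟨i, hi⟩ := i
  obtain ⟨j, hj⟩ := j
  simp only [hypJ, of_apply, Fin.mk.injEq, hop]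
  split_ifs <;> first | omega | (subst_vars; push_cast; ring_nf)

lemma hypJ_mulVec_apply (N : ℕ) (w : ℕ → ℝ) (y : Fin (N + 1) → ℝ) (i : Fin (N + 1)) :
    (hypJ N w *ᵥ y) i = jacobiRow N w (extendByZero y) i := by
  set Y := extendByZero y
  simp only [mulVec, dotProduct, hypJ_apply, sub_mul, ite_mul, zero_mul, ← extendByZero_apply y,
    Finset.sum_sub_distrib, jacobiRow]
  rw [Fin.sum_univ_eq_sum_range (fun j => if j = i then (N + w i) * Y j else 0),
    Fin.sum_univ_eq_sum_range (fun j => if j + 1 = i then hop N i * Y j else 0),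
    Fin.sum_univ_eq_sum_range (fun j => if j = i + 1 then hop N j * Y j else 0),
    Finset.sum_ite_eq', Finset.sum_ite_eq', if_pos (Finset.mem_range.2 i.isLt)]
  have hup : (if (i : ℕ) + 1 ∈ Finset.range (N + 1) then hop N (i + 1) * Y (i + 1) else 0)
      = hop N (i + 1) * Y (i + 1) := by
    split_ifs with h
    · rfl
    · rw [show (i : ℕ) = N by simp at h; omega, hop_succ_self, zero_mul]
  have hdown : ∑ j ∈ Finset.range (N + 1), (if j + 1 = (i : ℕ) then hop N i * Y j else 0)
      = hop N i * Y (i - 1) := by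
    obtain ⟨_ | k, hk⟩ := i
    · simp
    · simp only [Nat.add_right_cancel_iff, Finset.sum_ite_eq', Finset.mem_range,
        Nat.add_sub_cancel]
      rw [if_pos (by omega)]
  rw [hup, hdown]

lemma hypJ_isHermitian (N : ℕ) (w : ℕ → ℝ) : (hypJ N w).IsHermitian := by
  ext ⟨i, hi⟩ ⟨j, hj⟩
  simp only [conjTranspose_apply, hypJ, of_apply, Fin.mk.injEq, star_trivial]
  split_ifs <;> first | rfl | omega | (subst_vars; rfl)

lemma hypJ_apply_nonpos (N : ℕ) (w : ℕ → ℝ) {i j : Fin (N + 1)} (hij : i ≠ j) :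
    hypJ N w i j ≤ 0 := by
  simp only [hypJ, of_apply, if_neg hij]
  split_ifs <;> simp [Real.sqrt_nonneg]

lemma jacobiRow_eq_of_mulVec_eq {N : ℕ} {w : ℕ → ℝ} {y : Fin (N + 1) → ℝ} {l : ℝ}
    (hy : hypJ N w *ᵥ y = l • y) {m : ℕ} (hm : m ≤ N) :
    jacobiRow N w (extendByZero y) m = l * extendByZero y m := by
  have := congrFun hy ⟨m, Nat.lt_succ_of_le hm⟩
  rw [hypJ_mulVec_apply] at this
  rw [this, show extendByZero y m = y ⟨m, _⟩ from extendByZero_apply y ⟨m, _⟩]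
  rfl

lemma extendByZero_nonneg {n : ℕ} {y : Fin n → ℝ} (hy : 0 ≤ y) (m : ℕ) :
    0 ≤ extendByZero y m := by
  unfold extendByZero
  split_ifs
  exacts [hy _, le_rfl]

lemma exists_extendByZero_ne_zero {N : ℕ} {y : Fin (N + 1) → ℝ} (hy : y ≠ 0) :
    ∃ m ≤ N, extendByZero y m ≠ 0 := by
  obtain ⟨i, hi⟩ := Function.ne_iff.1 hy
  exact ⟨i, Nat.lt_succ_iff.1 i.isLt, by rwa [extendByZero_apply]⟩

lemma pos_of_jacobiRow_eq {N : ℕ} {w x : ℕ → ℝ} {l : ℝ} (hx0 : ∀ m, 0 ≤ x m)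
    (hx : ∃ m ≤ N, x m ≠ 0) (heig : ∀ m ≤ N, jacobiRow N w x m = l * x m) :
    ∀ m ≤ N, 0 < x m := by
  have hnbr : ∀ m ≤ N, x m = 0 →
      hop N m * x (m - 1) = 0 ∧ hop N (m + 1) * x (m + 1) = 0 := by
    intro m hm h0
    have := heig m hm
    simp only [jacobiRow, h0, mul_zero] at this
    have h1 := mul_nonneg (hop_nonneg N m) (hx0 (m - 1))
    have h2 := mul_nonneg (hop_nonneg N (m + 1)) (hx0 (m + 1))
    constructor <;> linarith
  have hstep : ∀ m < N, x m = 0 ↔ x (m + 1) = 0 := fun m hm =>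
    ⟨fun h => (mul_eq_zero.1 (hnbr m hm.le h).2).resolve_left (hop_pos (by omega) hm).ne',
      fun h => (mul_eq_zero.1 (hnbr (m + 1) hm h).1).resolve_left (hop_pos (by omega) hm).ne'⟩
  have hall : ∀ m ≤ N, x m = 0 ↔ x 0 = 0 := by
    intro m hm
    induction m with
    | zero => rfl
    | succ k ih => rw [← hstep k (by omega), ih (by omega)]
  obtain ⟨k, hk, hxk⟩ := hx
  intro m hm
  refine (hx0 m).lt_of_ne fun h => hxk ?_
  rw [hall k hk, ← hall m hm, h]

noncomputable def upRate (N : ℕ) (u : ℕ → ℝ) (m : ℕ) : ℝ := (N - m) * u m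

noncomputable def downRate (u : ℕ → ℝ) (m : ℕ) : ℝ := m / u (m - 1)

noncomputable def jumpRate (N : ℕ) (u : ℕ → ℝ) (m : ℕ) : ℝ :=
  upRate N u m + downRate u m

@[simp] lemma upRate_self (N : ℕ) (u : ℕ → ℝ) : upRate N u N = 0 := by simp [upRate]

@[simp] lemma downRate_zero (u : ℕ → ℝ) : downRate u 0 = 0 := by simp [downRate]

lemma downRate_succ (u : ℕ → ℝ) (m : ℕ) : downRate u (m + 1) = (m + 1) / u m := by
  simp [downRate]

/-- `G` is an eigenfunction, with eigenvalue `γ`, of minus the generator of the birth–death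
chain on `{0, …, N}` with rates `upRate N u` and `downRate u`. -/
def IsBirthDeathEigen (N : ℕ) (u : ℕ → ℝ) (γ : ℝ) (G : ℕ → ℝ) : Prop :=
  ∀ m ≤ N, γ * G m = downRate u m * (G m - G (m - 1)) - upRate N u m * (G (m + 1) - G m)

lemma IsBirthDeathEigen.neg {N : ℕ} {u G : ℕ → ℝ} {γ : ℝ}
    (h : IsBirthDeathEigen N u γ G) : IsBirthDeathEigen N u γ (-G) := fun m hm => by
  simp only [Pi.neg_apply]
  linear_combination -h m hm

noncomputable def groundRatio (N : ℕ) (x : ℕ → ℝ) (m : ℕ) : ℝ :=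
  hop N (m + 1) * x (m + 1) / ((N - m) * x m)

section GroundState

variable {N : ℕ} {x : ℕ → ℝ} (hx : ∀ m ≤ N, 0 < x m)
include hx

lemma groundRatio_pos {m : ℕ} (hm : m < N) : 0 < groundRatio N x m := by
  have : (m : ℝ) < N := by exact_mod_cast hm
  exact div_pos (mul_pos (hop_pos m.succ_pos hm) (hx _ hm))
    (mul_pos (by linarith) (hx m hm.le))

lemma upRate_groundRatio_mul {m : ℕ} (hm : m ≤ N) :
    upRate N (groundRatio N x) m * x m = hop N (m + 1) * x (m + 1) := by
  obtain hm | rfl := hm.lt_or_eq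
  · have : (N : ℝ) - m ≠ 0 := sub_ne_zero.2 (by exact_mod_cast hm.ne')
    have := (hx m hm.le).ne'
    simp only [upRate, groundRatio]
    field_simp
  · simp

lemma downRate_groundRatio_mul {m : ℕ} (hm : m ≤ N) :
    downRate (groundRatio N x) m * x m = hop N m * x (m - 1) := by
  obtain _ | k := m
  · simp
  have hk : (k : ℝ) < N := by exact_mod_cast hm
  have hsq := hop_sq (N := N) (m := k + 1) (by omega)
  have := (hx k (by omega)).ne'
  have := (hx (k + 1) hm).ne'
  have := (hop_pos k.succ_pos hm).ne'
  simp only [downRate_succ, groundRatio, Nat.add_sub_cancel]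
  push_cast at hsq ⊢
  field_simp
  linear_combination -hsq

lemma jacobiRow_eq_mul_div (w f : ℕ → ℝ) {m : ℕ} (hm : m ≤ N) :
    jacobiRow N w f m = x m * ((N + w m) * (f / x) m
      - downRate (groundRatio N x) m * (f / x) (m - 1)
      - upRate N (groundRatio N x) m * (f / x) (m + 1)) := by
  have hdiv : ∀ k ≤ N, f k = (f / x) k * x k := fun k hk => by
    rw [Pi.div_apply, div_mul_cancel₀ _ (hx k hk).ne']
  have hdown : hop N m * f (m - 1) = downRate (groundRatio N x) m * (f / x) (m - 1) * x m := by
    rw [hdiv (m - 1) (by omega)]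
    linear_combination -(f / x) (m - 1) * downRate_groundRatio_mul hx hm
  have hup : hop N (m + 1) * f (m + 1) = upRate N (groundRatio N x) m * (f / x) (m + 1) * x m := by
    obtain hm | rfl := hm.lt_or_eq
    · rw [hdiv (m + 1) hm]
      linear_combination -(f / x) (m + 1) * upRate_groundRatio_mul hx hm.le
    · simp
  rw [jacobiRow, hdown, hup, hdiv m hm]
  ring

end GroundState

section GroundStateEigen

variable {N : ℕ} {w x : ℕ → ℝ} {l : ℝ} (hx : ∀ m ≤ N, 0 < x m)
  (hxl : ∀ m ≤ N, jacobiRow N w x m = l * x m)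
include hx hxl

lemma jumpRate_groundRatio {m : ℕ} (hm : m ≤ N) :
    jumpRate N (groundRatio N x) m = N + w m - l := by
  have h := hxl m hm
  rw [jacobiRow, ← downRate_groundRatio_mul hx hm, ← upRate_groundRatio_mul hx hm] at h
  refine mul_right_cancel₀ (hx m hm).ne' ?_
  rw [jumpRate]
  linear_combination -h

lemma isBirthDeathEigen_div {y : ℕ → ℝ} {l' : ℝ}
    (hy : ∀ m ≤ N, jacobiRow N w y m = l' * y m) :
    IsBirthDeathEigen N (groundRatio N x) (l' - l) (y / x) := by
  intro m hm
  have h := hy m hm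
  rw [jacobiRow_eq_mul_div hx w y hm] at h
  have hr := jumpRate_groundRatio hx hxl hm
  have hym : (y / x) m * x m = y m := by rw [Pi.div_apply, div_mul_cancel₀ _ (hx m hm).ne']
  refine mul_left_cancel₀ (hx m hm).ne' ?_
  rw [jumpRate] at hr
  linear_combination -h - x m * (y / x) m * hr + l' * hym

end GroundStateEigen

section Rates

variable {N : ℕ} {u G : ℕ → ℝ} {γ : ℝ}

lemma upRate_nonneg (hu : ∀ m < N, 0 < u m) {m : ℕ} (hm : m ≤ N) : 0 ≤ upRate N u m := by
  have : (m : ℝ) ≤ N := by exact_mod_cast hm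
  obtain hm | rfl := hm.lt_or_eq
  · exact mul_nonneg (by linarith) (hu m hm).le
  · simp

lemma downRate_nonneg (hu : ∀ m < N, 0 < u m) {m : ℕ} (hm : m ≤ N) : 0 ≤ downRate u m := by
  obtain _ | k := m
  · simp
  · rw [downRate_succ]
    exact div_nonneg (by positivity) (hu k hm).le

def RisesAt (N : ℕ) (u : ℕ → ℝ) (j : ℕ) : Prop :=
  u j < u (j + 1) ∧ (u j)⁻¹ - u (j + 1) ≤ jumpRate N u (j + 1) - jumpRate N u j

lemma risesAt_of_lt (hu : ∀ m < N, 0 < u m) {k : ℕ} (hk : k + 2 ≤ N) (hinc : u k < u (k + 1))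
    (hprev : 0 < k → u k ≤ u (k - 1)) : RisesAt N u k := by
  have hexp : jumpRate N u (k + 1) - jumpRate N u k - ((u k)⁻¹ - u (k + 1))
      = (N - k) * (u (k + 1) - u k) + k * ((u k)⁻¹ - (u (k - 1))⁻¹) := by
    simp only [jumpRate, upRate, downRate]
    push_cast
    ring
  have h1 : 0 ≤ (N - k : ℝ) * (u (k + 1) - u k) := by
    have : (k : ℝ) + 2 ≤ N := by exact_mod_cast hk
    exact mul_nonneg (by linarith) (by linarith)
  have h2 : 0 ≤ (k : ℝ) * ((u k)⁻¹ - (u (k - 1))⁻¹) := by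
    obtain _ | j := k
    · simp
    · refine mul_nonneg (by positivity) (sub_nonneg.2 (inv_anti₀ (hu _ (by omega)) ?_))
      exact hprev j.succ_pos
  exact ⟨hinc, by linarith⟩

lemma RisesAt.succ (hu : ∀ m < N, 0 < u m) {j : ℕ} (hj : j + 2 ≤ N)
    (hconv : 0 ≤ jumpRate N u j - 2 * jumpRate N u (j + 1) + jumpRate N u (j + 2))
    (h : RisesAt N u j) : j + 3 ≤ N ∧ RisesAt N u (j + 1) := by
  obtain ⟨hinc, hrise⟩ := h
  have hinv : (u (j + 1))⁻¹ < (u j)⁻¹ := inv_strictAnti₀ (hu j (by omega)) hinc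
  have hexp : jumpRate N u (j + 2) - jumpRate N u (j + 1) = (N - j - 2) * (u (j + 2) - u (j + 1))
      - u (j + 1) + (j + 2) * (u (j + 1))⁻¹ - (j + 1) * (u j)⁻¹ := by
    simp only [jumpRate, upRate, downRate_succ]
    push_cast
    ring
  have hprod : 0 < (N - j - 2 : ℝ) * (u (j + 2) - u (j + 1)) := by
    have : 0 < (j + 2 : ℝ) * ((u j)⁻¹ - (u (j + 1))⁻¹) :=
      mul_pos (by positivity) (by linarith)
    linarith
  have hN : (0 : ℝ) ≤ N - j - 2 := by
    have : (j : ℝ) + 2 ≤ N := by exact_mod_cast hj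
    linarith
  obtain ⟨hN', hs⟩ := (pos_and_pos_or_neg_and_neg_of_mul_pos hprod).resolve_right
    fun h => by linarith [h.1]
  refine ⟨?_, by linarith, by linarith⟩
  have : (j : ℝ) + 2 < N := by linarith
  exact_mod_cast this

/-- At a first rise of `u`, `RisesAt` holds; convexity of the jump rate then propagates it up to
`j = N - 2`, where `RisesAt.succ` is impossible. -/
lemma antitoneOn_of_convex_jumpRate (hu : ∀ m < N, 0 < u m)
    (hconv : ∀ m, 1 ≤ m → m < N →
      0 ≤ jumpRate N u (m - 1) - 2 * jumpRate N u m + jumpRate N u (m + 1)) :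
    AntitoneOn u (Iio N) := by
  have hconv' (j : ℕ) (hj : j + 2 ≤ N) :
      0 ≤ jumpRate N u j - 2 * jumpRate N u (j + 1) + jumpRate N u (j + 2) := by
    simpa using hconv (j + 1) (by omega) (by omega)
  have hnot (d : ℕ) : ∀ j, j + 2 + d = N → ¬RisesAt N u j := by
    induction d with
    | zero => exact fun j hj h => absurd (h.succ hu (by omega) (hconv' j (by omega))).1 (by omega)
    | succ d ih =>
      exact fun j hj h => ih (j + 1) (by omega) (h.succ hu (by omega) (hconv' j (by omega))).2
  have hsucc (k : ℕ) : k + 2 ≤ N → u (k + 1) ≤ u k := by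
    induction k using Nat.strong_induction_on with
    | _ k ih =>
      intro hk
      by_contra! hinc
      refine hnot (N - (k + 2)) k (by omega) (risesAt_of_lt hu hk hinc fun hk0 => ?_)
      simpa [Nat.sub_add_cancel hk0] using ih (k - 1) (by omega) (by omega)
  exact antitoneOn_of_add_one_le ordConnected_Iio fun k _ _ hk => hsucc k (by simp at hk; omega)

lemma le_upRate_sub_upRate_succ (hanti : AntitoneOn u (Iio N)) {m : ℕ} (hm : m < N) :
    u m ≤ upRate N u m - upRate N u (m + 1) := by
  have hexp : upRate N u m - upRate N u (m + 1) - u m = (N - (m + 1)) * (u m - u (m + 1)) := by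
    simp only [upRate]
    push_cast
    ring
  have : 0 ≤ (N - (m + 1) : ℝ) * (u m - u (m + 1)) := by
    obtain hm1 | hm1 := Nat.succ_le_of_lt hm |>.lt_or_eq
    · have : ((m + 1 : ℕ) : ℝ) < N := by exact_mod_cast hm1
      push_cast at this
      exact mul_nonneg (by linarith) (sub_nonneg.2 (hanti hm hm1 m.le_succ))
    · rw [← hm1]
      simp
  linarith

lemma inv_le_downRate_succ_sub (hu : ∀ m < N, 0 < u m) (hanti : AntitoneOn u (Iio N)) {m : ℕ}
    (hm : m < N) :
    (u m)⁻¹ ≤ downRate u (m + 1) - downRate u m := by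
  obtain _ | k := m
  · simp [downRate_succ]
  · have hk := hanti (mem_Iio.2 (by omega : k < N)) hm k.le_succ
    have := inv_anti₀ (hu _ hm) hk
    rw [downRate_succ, downRate_succ, div_eq_mul_inv, div_eq_mul_inv]
    push_cast
    nlinarith

lemma two_le_upRate_sub_add_downRate_sub (hu : ∀ m < N, 0 < u m)
    (hanti : AntitoneOn u (Iio N)) {m : ℕ} (hm : m < N) :
    2 ≤ (upRate N u m - upRate N u (m + 1)) + (downRate u (m + 1) - downRate u m) := by
  have hpos := hu m hm
  have hamgm : 2 ≤ u m + (u m)⁻¹ := by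
    rw [← sub_nonneg, show u m + (u m)⁻¹ - 2 = (u m - 1) ^ 2 / u m by field_simp; ring]
    positivity
  linarith [le_upRate_sub_upRate_succ hanti hm, inv_le_downRate_succ_sub hu hanti hm]

lemma IsBirthDeathEigen.two_le_of_isMax (h : IsBirthDeathEigen N u γ G)
    (hu : ∀ m < N, 0 < u m) (hanti : AntitoneOn u (Iio N)) {m : ℕ} (hm : m < N)
    (hpos : 0 < G (m + 1) - G m)
    (hmax : ∀ k < N, |G (k + 1) - G k| ≤ G (m + 1) - G m) : 2 ≤ γ := by
  set M := G (m + 1) - G m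
  have hrel : γ * M = (upRate N u m + downRate u (m + 1)) * M
      - upRate N u (m + 1) * (G (m + 2) - G (m + 1)) - downRate u m * (G m - G (m - 1)) := by
    have h1 := h (m + 1) hm
    rw [Nat.add_sub_cancel] at h1
    linear_combination h1 - h m hm.le
  have hup : upRate N u (m + 1) * (G (m + 2) - G (m + 1)) ≤ upRate N u (m + 1) * M := by
    obtain hm1 | hm1 := Nat.succ_le_of_lt hm |>.lt_or_eq
    · exact mul_le_mul_of_nonneg_left ((le_abs_self _).trans (hmax _ hm1))
        (upRate_nonneg hu hm1.le)
    · simp [← hm1]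
  have hdown : downRate u m * (G m - G (m - 1)) ≤ downRate u m * M := by
    obtain _ | k := m
    · simp
    · exact mul_le_mul_of_nonneg_left ((le_abs_self _).trans (hmax k (by omega)))
        (downRate_nonneg hu hm.le)
  have hM := mul_le_mul_of_nonneg_right (two_le_upRate_sub_add_downRate_sub hu hanti hm) hpos.le
  exact le_of_mul_le_mul_right (by linarith) hpos

lemma IsBirthDeathEigen.two_le (h : IsBirthDeathEigen N u γ G)
    (hu : ∀ m < N, 0 < u m) (hanti : AntitoneOn u (Iio N)) (hγ : γ ≠ 0)
    (hG : ∃ m ≤ N, G m ≠ 0) : 2 ≤ γ := by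
  obtain ⟨k, hk, hGk⟩ : ∃ k < N, G (k + 1) - G k ≠ 0 := by
    by_contra! hflat
    obtain ⟨m, hm, hGm⟩ := hG
    have hdown : G m - G (m - 1) = 0 := by
      obtain _ | j := m
      · simp
      · exact hflat j (by omega)
    have hup : upRate N u m * (G (m + 1) - G m) = 0 := by
      obtain hm | rfl := hm.lt_or_eq
      · rw [hflat m hm, mul_zero]
      · simp
    have := h m hm
    rw [hdown, hup, mul_zero, sub_zero] at this
    exact hGm ((mul_eq_zero.1 this).resolve_left hγ)
  obtain ⟨m, hm, hmax⟩ := (Finset.range N).exists_max_image (fun k => |G (k + 1) - G k|)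
    ⟨k, Finset.mem_range.2 hk⟩
  simp only [Finset.mem_range] at hm hmax
  have hM : G (m + 1) - G m ≠ 0 := abs_pos.1 ((abs_pos.2 hGk).trans_le (hmax k hk))
  rcases hM.lt_or_gt with hneg | hpos
  · refine h.neg.two_le_of_isMax hu hanti hm (by simp only [Pi.neg_apply]; linarith)
      fun j hj => ?_
    have := hmax j hj
    rw [abs_of_neg hneg] at this
    simp only [Pi.neg_apply, neg_sub_neg]
    rw [abs_sub_comm]
    linarith
  · exact h.two_le_of_isMax hu hanti hm hpos fun j hj => (hmax j hj).trans_eq (abs_of_pos hpos)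

end Rates

end HypercubeGap

open HypercubeGap

theorem hypercube_gap_convex_general (N : ℕ) (w : ℕ → ℝ)
    (hw : ∀ m : ℕ, 1 ≤ m → m < N → 0 ≤ w (m - 1) - 2 * w m + w (m + 1))
    (l1 l2 : ℝ) (h : TwoSmallest (hypJ N w) l1 l2) :
    l2 - l1 ≥ 2 := by
  obtain ⟨hl1, ⟨y, hy0, hy⟩, hlt, hmin⟩ := h
  obtain ⟨x, hx0, hx_ne, hx⟩ := (hypJ_isHermitian N w).exists_nonneg_eigenvector
    (fun _ _ => hypJ_apply_nonpos N w) hl1 fun μ hμ => (hmin μ hμ).1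
  set X := extendByZero x
  set u := groundRatio N X
  have hXl1 : ∀ m ≤ N, jacobiRow N w X m = l1 * X m := fun m => jacobiRow_eq_of_mulVec_eq hx
  have hXpos : ∀ m ≤ N, 0 < X m :=
    pos_of_jacobiRow_eq (extendByZero_nonneg hx0) (exists_extendByZero_ne_zero hx_ne) hXl1
  have hu : ∀ m < N, 0 < u m := fun m => groundRatio_pos hXpos
  have hanti : AntitoneOn u (Iio N) := antitoneOn_of_convex_jumpRate hu fun m h1 h2 => by
    rw [jumpRate_groundRatio hXpos hXl1 (by omega), jumpRate_groundRatio hXpos hXl1 h2.le,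
      jumpRate_groundRatio hXpos hXl1 h2]
    linarith [hw m h1 h2]
  obtain ⟨m, hm, hym⟩ := exists_extendByZero_ne_zero hy0
  exact (isBirthDeathEigen_div hXpos hXl1 fun m => jacobiRow_eq_of_mulVec_eq hy).two_le hu hanti
    (sub_ne_zero.2 hlt.ne') ⟨m, hm, div_ne_zero hym (hXpos m hm).ne'⟩

/-- for every `N ≥ 1` and convex `w` on `{0,…,N}`, the fundamental gap
of the hypercube Jacobi matrix `J_w` is at least `2`. -/
theorem hypercube_gap_convex (N : ℕ) (hN : 1 ≤ N) (w : ℕ → ℝ)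
    (hw : ∀ m : ℕ, 1 ≤ m → m < N → 0 ≤ w (m - 1) - 2 * w m + w (m + 1))
    (l1 l2 : ℝ) (h : TwoSmallest (hypJ N w) l1 l2) :
    l2 - l1 ≥ 2 :=
  hypercube_gap_convex_general N w hw l1 l2 h
end

section
/- Let N ≥ 2, W : {1,…,N} → ℝ, and let λ_1 < λ_2 be the two smallest eigenvalues of H_W(P_N) with unit eigenvectors u(λ_1), u(λ_2), extended by u_0(λ) = u_1(λ) and u_{N+1}(λ) = u_N(λ). Assume u_i(λ_1) > 0 for all 1 ≤ i ≤ N, that u_1(λ_2) > 0, and that the sequence (u_i(λ_2))_{i=1}^{N} has exactly one generalized zero. Then the Casoratian w_i = u_{i+1}(λ_2)·u_i(λ_1) − u_i(λ_2)·u_{i+1}(λ_1) satisfies w_i ≤ 0 for every i ∈ {0,…,N}; equivalently, the sequence (u_i(λ_2)/u_i(λ_1))_{i=0}^{N+1} is non-increasing. -/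
/-!
Multiplying the recurrence of `u(λ₂)` by `u(λ₁)` and vice versa and summing gives
`w_k = (λ₁ - λ₂) ∑_{j ≤ k} u_j(λ₁) u_j(λ₂)`. The boundary conditions force `w_N = 0`, so the
full sum vanishes. With a single generalized zero, `u(λ₂)` is `≥ 0` up to some index `p` and
`≤ 0` after it, hence every partial sum is `≥ 0`: before `p` it is a sum of nonnegative terms,
after `p` it is minus a sum of nonpositive ones. As `λ₁ < λ₂`, `w_k ≤ 0`.
-/

/-- The path Schrödinger operator `H_W(P_N)`; vertex `i : Fin N` has label `i + 1`. -/
noncomputable def pathH (N : ℕ) (W : ℕ → ℝ) : Matrix (Fin N) (Fin N) ℝ :=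
  Matrix.of fun i j =>
    if i = j then
      (if (i : ℕ) = 0 ∨ (i : ℕ) = N - 1 then (1 : ℝ) else 2) + W ((i : ℕ) + 1)
    else if (i : ℕ) + 1 = (j : ℕ) ∨ (j : ℕ) + 1 = (i : ℕ) then -1 else 0

lemma pathH_mulVec_apply (N : ℕ) (W u : ℕ → ℝ) (a : ℕ) (ha : a < N) :
    (pathH N W).mulVec (fun i : Fin N => u (i + 1)) ⟨a, ha⟩ =
      ((if a = 0 ∨ a = N - 1 then (1 : ℝ) else 2) + W (a + 1)) * u (a + 1)
        - (if a + 1 < N then u (a + 2) else 0) - (if a = 0 then 0 else u a) := by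
  set D := (if a = 0 ∨ a = N - 1 then (1 : ℝ) else 2) + W (a + 1)
  have hentry : ∀ b : ℕ,
      (if a = b then D else if a + 1 = b ∨ b + 1 = a then -1 else 0) * u (b + 1) =
      (if b = a then D * u (a + 1) else 0) - (if b = a + 1 then u (a + 2) else 0)
        - (if b + 1 = a then u a else 0) := by
    intro b
    split_ifs <;> first | omega | (subst_vars; ring)
  have hbelow : ∑ b ∈ Finset.range N, (if b + 1 = a then u a else 0) =
      if a = 0 then 0 else u a := by
    rcases a with _ | c
    · simp
    · simp [Finset.sum_ite_eq', show c < N by omega]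
  simp only [Matrix.mulVec, dotProduct, pathH, Matrix.of_apply, Fin.ext_iff]
  rw [Fin.sum_univ_eq_sum_range fun b =>
    (if a = b then D else if a + 1 = b ∨ b + 1 = a then -1 else 0) * u (b + 1)]
  simp only [hentry, Finset.sum_sub_distrib, Finset.sum_ite_eq', Finset.mem_range, ha, if_true,
    hbelow]

/-- The eigenvalue equation of `H_W(P_N)` for the extended sequence `u`, written at the
vertex with label `a + 1`. -/
def SolvesPathEquation (N : ℕ) (W : ℕ → ℝ) (lam : ℝ) (u : ℕ → ℝ) : Prop :=
  ∀ a < N, u a + u (a + 2) = (2 + W (a + 1) - lam) * u (a + 1)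

lemma solvesPathEquation_of_mulVec_eq_smul {N : ℕ} (hN : 2 ≤ N) {W : ℕ → ℝ} {lam : ℝ}
    {u : ℕ → ℝ}
    (hu : (pathH N W).mulVec (fun i : Fin N => u ((i : ℕ) + 1)) =
      lam • fun i : Fin N => u ((i : ℕ) + 1))
    (hu0 : u 0 = u 1) (huN : u (N + 1) = u N) :
    SolvesPathEquation N W lam u := by
  intro a ha
  have hrow := congrFun hu ⟨a, ha⟩
  rw [pathH_mulVec_apply] at hrow
  simp only [Pi.smul_apply, smul_eq_mul] at hrow
  rcases Nat.eq_zero_or_pos a with rfl | ha0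
  · simp only [true_or, if_true, show 0 + 1 < N by omega] at hrow
    rw [hu0]
    linarith
  · rcases (show a + 1 ≤ N by omega).eq_or_lt with rfl | haN
    · simp only [Nat.add_sub_cancel, show a ≠ 0 by omega, or_true, if_true, lt_irrefl,
        if_false] at hrow
      rw [huN]
      linarith
    · simp only [show a ≠ 0 by omega, show a ≠ N - 1 by omega, haN, or_false, if_true,
        if_false] at hrow
      linarith

def casoratian (u v : ℕ → ℝ) (i : ℕ) : ℝ := v (i + 1) * u i - v i * u (i + 1)

section Casoratian

variable {N : ℕ} {W : ℕ → ℝ} {lam mu : ℝ} {u v : ℕ → ℝ}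

/-- Discrete Green's identity. -/
lemma casoratian_eq_mul_sum (hu : SolvesPathEquation N W lam u)
    (hv : SolvesPathEquation N W mu v) (hu0 : u 0 = u 1) (hv0 : v 0 = v 1) :
    ∀ k ≤ N, casoratian u v k = (lam - mu) * ∑ j ∈ Finset.Ioc 0 k, u j * v j := by
  intro k
  induction k with
  | zero =>
    intro _
    simp [casoratian, hu0, hv0]
  | succ n ih =>
    intro hn
    rw [Finset.sum_Ioc_succ_top (Nat.zero_le n), mul_add, ← ih (by omega)]
    unfold casoratian
    linear_combination u (n + 1) * hv n (by omega) - v (n + 1) * hu n (by omega)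

lemma sum_mul_eq_zero_of_solvesPathEquation (hlm : lam ≠ mu)
    (hu : SolvesPathEquation N W lam u) (hv : SolvesPathEquation N W mu v)
    (hu0 : u 0 = u 1) (hv0 : v 0 = v 1) (huN : u (N + 1) = u N) (hvN : v (N + 1) = v N) :
    ∑ j ∈ Finset.Ioc 0 N, u j * v j = 0 := by
  have hN := casoratian_eq_mul_sum hu hv hu0 hv0 N le_rfl
  rw [casoratian, huN, hvN, sub_self, eq_comm] at hN
  exact (mul_eq_zero.mp hN).resolve_left (sub_ne_zero.mpr hlm)

lemma div_succ_le_div_of_casoratian_nonpos {i : ℕ} (h : casoratian u v i ≤ 0)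
    (hi : 0 < u i) (hi' : 0 < u (i + 1)) : v (i + 1) / u (i + 1) ≤ v i / u i := by
  rw [div_le_div_iff₀ hi' hi]
  unfold casoratian at h
  linarith

end Casoratian

def IsGeneralizedZero (v : ℕ → ℝ) (m : ℕ) : Prop := v m = 0 ∨ v m * v (m + 1) < 0

section GeneralizedZero

variable {v : ℕ → ℝ}

@[simp]
lemma isGeneralizedZero_neg {n : ℕ} : IsGeneralizedZero (-v) n ↔ IsGeneralizedZero v n := by
  simp [IsGeneralizedZero]

lemma nonneg_succ_of_not_isGeneralizedZero {n : ℕ} (hn : 0 < v n)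
    (h : ¬ IsGeneralizedZero v n) : 0 ≤ v (n + 1) :=
  nonneg_of_mul_nonneg_right (not_lt.mp fun h' => h (Or.inr h')) hn

lemma pos_of_forall_not_isGeneralizedZero {a b : ℕ} (ha : 0 < v a)
    (h : ∀ n, a ≤ n → n ≤ b → ¬ IsGeneralizedZero v n) :
    ∀ i, a ≤ i → i ≤ b → 0 < v i := by
  intro i hai
  induction i, hai using Nat.le_induction with
  | base => exact fun _ => ha
  | succ n han ih =>
    intro hnb
    refine (nonneg_succ_of_not_isGeneralizedZero (ih (by omega)) (h n han (by omega))).lt_of_ne' ?_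
    exact fun h0 => h (n + 1) (by omega) hnb (Or.inl h0)

lemma nonneg_of_forall_not_isGeneralizedZero {a b : ℕ} (ha : 0 < v a)
    (h : ∀ n, a ≤ n → n < b → ¬ IsGeneralizedZero v n) :
    ∀ i, a ≤ i → i ≤ b → 0 ≤ v i := by
  intro i hai hib
  rcases hai.eq_or_lt with rfl | hai
  · exact ha.le
  obtain ⟨j, rfl⟩ : ∃ j, i = j + 1 := ⟨i - 1, by omega⟩
  have hj : 0 < v j :=
    pos_of_forall_not_isGeneralizedZero ha (fun n h1 h2 => h n h1 (by omega)) j (by omega) le_rfl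
  exact nonneg_succ_of_not_isGeneralizedZero hj (h j (by omega) (by omega))

lemma exists_sign_change_of_isGeneralizedZero {N m : ℕ} (hv1 : 0 < v 1) (hmN : m ≤ N)
    (hm : ∀ n, 1 ≤ n → n ≤ N → IsGeneralizedZero v n → n = m) :
    ∃ p ≤ N, (∀ i, 1 ≤ i → i ≤ p → 0 ≤ v i) ∧
      ∀ i, p < i → i ≤ N → v i ≤ 0 := by
  have hbefore : ∀ i, 1 ≤ i → i ≤ m → 0 ≤ v i :=
    nonneg_of_forall_not_isGeneralizedZero hv1 fun n h1 h2 hz => by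
      have := hm n h1 (by omega) hz
      omega
  rcases hmN.eq_or_lt with rfl | hmN
  · exact ⟨m, le_rfl, hbefore, fun i h1 h2 => absurd h2 (by omega)⟩
  have hafter : ∀ n, m + 1 ≤ n → n < N → ¬ IsGeneralizedZero v n := fun n h1 h2 hz => by
    have := hm n (by omega) (by omega) hz
    omega
  have hne : v (m + 1) ≠ 0 := fun h0 => by
    have := hm (m + 1) (by omega) (by omega) (Or.inl h0)
    omega
  rcases hne.lt_or_gt with hneg | hpos
  · refine ⟨m, hmN.le, hbefore, fun i h1 h2 => ?_⟩
    have := nonneg_of_forall_not_isGeneralizedZero (v := -v) (neg_pos.mpr hneg)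
      (fun n h1 h2 => isGeneralizedZero_neg.not.mpr (hafter n h1 h2)) i h1 h2
    simpa using this
  · refine ⟨N, le_rfl, fun i h1 h2 => ?_, fun i h1 h2 => absurd h2 (by omega)⟩
    rcases le_or_gt i m with him | him
    · exact hbefore i h1 him
    · exact nonneg_of_forall_not_isGeneralizedZero hpos hafter i him h2

end GeneralizedZero

lemma sum_Ioc_nonneg_of_sign_change {f : ℕ → ℝ} {p N : ℕ}
    (hpos : ∀ i, 1 ≤ i → i ≤ p → 0 ≤ f i)
    (hneg : ∀ i, p < i → i ≤ N → f i ≤ 0)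
    (hsum : ∑ i ∈ Finset.Ioc 0 N, f i = 0) {k : ℕ} (hk : k ≤ N) :
    0 ≤ ∑ i ∈ Finset.Ioc 0 k, f i := by
  rcases le_or_gt k p with hkp | hpk
  · refine Finset.sum_nonneg fun i hi => ?_
    rw [Finset.mem_Ioc] at hi
    exact hpos i hi.1 (hi.2.trans hkp)
  · have htail : ∑ i ∈ Finset.Ioc k N, f i ≤ 0 := Finset.sum_nonpos fun i hi => by
      rw [Finset.mem_Ioc] at hi
      exact hneg i (by omega) hi.2
    have := Finset.sum_Ioc_consecutive f (Nat.zero_le k) hk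
    linarith

theorem path_casoratian_nonpos_general (N : ℕ) (hN : 2 ≤ N) (W : ℕ → ℝ)
    (l1 l2 : ℝ) (h : TwoSmallest (pathH N W) l1 l2)
    (u1 u2 : ℕ → ℝ)
    (hu1e : (pathH N W).mulVec (fun i : Fin N => u1 ((i : ℕ) + 1)) =
      l1 • fun i : Fin N => u1 ((i : ℕ) + 1))
    (hu1l : u1 0 = u1 1) (hu1r : u1 (N + 1) = u1 N)
    (hu2e : (pathH N W).mulVec (fun i : Fin N => u2 ((i : ℕ) + 1)) =
      l2 • fun i : Fin N => u2 ((i : ℕ) + 1))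
    (hu2l : u2 0 = u2 1) (hu2r : u2 (N + 1) = u2 N)
    (hu1pos : ∀ i : ℕ, 1 ≤ i → i ≤ N → 0 < u1 i)
    (hu21 : 0 < u2 1)
    (hgz : ∃! m : ℕ, (1 ≤ m ∧ m ≤ N) ∧ (u2 m = 0 ∨ u2 m * u2 (m + 1) < 0)) :
    (∀ i : ℕ, i ≤ N → u2 (i + 1) * u1 i - u2 i * u1 (i + 1) ≤ 0) ∧
    (∀ i : ℕ, i ≤ N → u2 (i + 1) / u1 (i + 1) ≤ u2 i / u1 i) := by
  have hl : l1 < l2 := h.2.2.1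
  have hu1 := solvesPathEquation_of_mulVec_eq_smul hN hu1e hu1l hu1r
  have hu2 := solvesPathEquation_of_mulVec_eq_smul hN hu2e hu2l hu2r
  have horth := sum_mul_eq_zero_of_solvesPathEquation hl.ne hu1 hu2 hu1l hu2l hu1r hu2r
  obtain ⟨m, ⟨⟨-, hmN⟩, -⟩, hm⟩ := hgz
  obtain ⟨p, hpN, hpos, hneg⟩ := exists_sign_change_of_isGeneralizedZero hu21 hmN
    fun n h1 h2 hz => hm n ⟨⟨h1, h2⟩, hz⟩
  have hcas : ∀ i ≤ N, casoratian u1 u2 i ≤ 0 := fun i hi => by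
    rw [casoratian_eq_mul_sum hu1 hu2 hu1l hu2l i hi]
    refine mul_nonpos_of_nonpos_of_nonneg (sub_nonpos.mpr hl.le) ?_
    refine sum_Ioc_nonneg_of_sign_change (f := fun j => u1 j * u2 j) (p := p)
      (fun j h1 h2 => ?_) (fun j h1 h2 => ?_) horth hi
    · exact mul_nonneg (hu1pos j h1 (by omega)).le (hpos j h1 h2)
    · exact mul_nonpos_of_nonneg_of_nonpos (hu1pos j (by omega) h2).le (hneg j h1 h2)
  have hu1pos' : ∀ i ≤ N + 1, 0 < u1 i := fun i hi => by
    rcases Nat.eq_zero_or_pos i with rfl | hi0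
    · exact hu1l ▸ hu1pos 1 le_rfl (by omega)
    rcases hi.eq_or_lt with rfl | hiN
    · exact hu1r ▸ hu1pos N (by omega) le_rfl
    · exact hu1pos i hi0 (by omega)
  exact ⟨hcas, fun i hi => div_succ_le_div_of_casoratian_nonpos (hcas i hi)
    (hu1pos' i (by omega)) (hu1pos' (i + 1) (by omega))⟩

/-- with `u1, u2 : ℕ → ℝ` the extended unit eigenvectors (indexed by labels
`1,…,N`, extended by `u 0 = u 1` and `u (N+1) = u N`) of the two smallest eigenvalues of
`H_W(P_N)`, with `u1` positive, `u2 1 > 0`, and `(u2 i)_{i=1}^N` having exactly one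
generalized zero, the Casoratian `w_i = u2 (i+1) * u1 i - u2 i * u1 (i+1)` is `≤ 0` for
all `i ∈ {0,…,N}`; equivalently the sequence `u2 i / u1 i`, `i = 0,…,N+1`, is
non-increasing. -/
theorem path_casoratian_nonpos (N : ℕ) (hN : 2 ≤ N) (W : ℕ → ℝ)
    (l1 l2 : ℝ) (h : TwoSmallest (pathH N W) l1 l2)
    (u1 u2 : ℕ → ℝ)
    (hu1e : (pathH N W).mulVec (fun i : Fin N => u1 ((i : ℕ) + 1)) =
      l1 • fun i : Fin N => u1 ((i : ℕ) + 1))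
    (hu1n : ∑ i ∈ Finset.Icc 1 N, u1 i ^ 2 = 1)
    (hu1l : u1 0 = u1 1) (hu1r : u1 (N + 1) = u1 N)
    (hu2e : (pathH N W).mulVec (fun i : Fin N => u2 ((i : ℕ) + 1)) =
      l2 • fun i : Fin N => u2 ((i : ℕ) + 1))
    (hu2n : ∑ i ∈ Finset.Icc 1 N, u2 i ^ 2 = 1)
    (hu2l : u2 0 = u2 1) (hu2r : u2 (N + 1) = u2 N)
    (hu1pos : ∀ i : ℕ, 1 ≤ i → i ≤ N → 0 < u1 i)
    (hu21 : 0 < u2 1)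
    (hgz : ∃! m : ℕ, (1 ≤ m ∧ m ≤ N) ∧ (u2 m = 0 ∨ u2 m * u2 (m + 1) < 0)) :
    (∀ i : ℕ, i ≤ N → u2 (i + 1) * u1 i - u2 i * u1 (i + 1) ≤ 0) ∧
    (∀ i : ℕ, i ≤ N → u2 (i + 1) / u1 (i + 1) ≤ u2 i / u1 i) :=
  path_casoratian_nonpos_general N hN W l1 l2 h u1 u2 hu1e hu1l hu1r hu2e hu2l hu2r hu1pos hu21 hgz
end

section
/- Let N ≥ 2, α ≥ 0, and let λ_1 < λ_2 be the two smallest eigenvalues of H_{αU}(P_N) with unit eigenvectors u(λ_1), u(λ_2). If u_1(λ_2)² ≤ u_1(λ_1)², then Σ_{i=1}^{N} (i − 1)·(u_i(λ_2)² − u_i(λ_1)²) ≥ 0 (by the Hellmann–Feynman theorem this sum equals the derivative dΓ/dα of the gap of H_{αU}(P_N) with respect to α). -/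
open Matrix

section GroundState

variable {n : ℕ} {S : Matrix (Fin n) (Fin n) ℝ} {b : ℝ} {x : Fin n → ℝ}

theorem posSemidef_sub_smul_one (hS : S.IsHermitian) (hb : ∀ μ, IsEigen S μ → b ≤ μ) :
    (S - b • 1).PosSemidef := by
  have hSb : (S - b • 1).IsHermitian := hS.sub (isHermitian_one.smul (IsSelfAdjoint.all b))
  refine hSb.posSemidef_iff_eigenvalues_nonneg.mpr fun i => ?_
  set e := hSb.eigenvectorBasis i
  have he : S *ᵥ e = (hSb.eigenvalues i + b) • e := by
    have := hSb.mulVec_eigenvectorBasis i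
    rw [sub_mulVec, smul_mulVec, one_mulVec] at this
    rw [add_smul, ← this]; abel
  have he0 : (e : Fin n → ℝ) ≠ 0 := fun h0 =>
    hSb.eigenvectorBasis.orthonormal.ne_zero i (by ext j; simp [e, h0])
  simpa using hb _ ⟨_, he0, he⟩

theorem mulVec_eq_smul_of_dotProduct_mulVec_le (hS : S.IsHermitian)
    (hb : ∀ μ, IsEigen S μ → b ≤ μ) (hx : x ⬝ᵥ S *ᵥ x ≤ b * (x ⬝ᵥ x)) : S *ᵥ x = b • x := by
  have hPSD := posSemidef_sub_smul_one hS hb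
  have hzero : star x ⬝ᵥ (S - b • 1) *ᵥ x = 0 := by
    have := hPSD.dotProduct_mulVec_nonneg x
    rw [sub_mulVec, smul_mulVec, one_mulVec, dotProduct_sub, dotProduct_smul, smul_eq_mul]
      at this ⊢
    simp only [star_trivial] at this ⊢
    linarith
  have := (hPSD.dotProduct_mulVec_zero_iff x).mp hzero
  rwa [sub_mulVec, smul_mulVec, one_mulVec, sub_eq_zero] at this

theorem abs_dotProduct_mulVec_abs_le (hoff : ∀ i j, i ≠ j → S i j ≤ 0) (x : Fin n → ℝ) :
    |x| ⬝ᵥ S *ᵥ |x| ≤ x ⬝ᵥ S *ᵥ x := by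
  simp only [dotProduct, mulVec, Finset.mul_sum, Pi.abs_apply]
  refine Finset.sum_le_sum fun i _ => Finset.sum_le_sum fun j _ => ?_
  rcases eq_or_ne i j with rfl | hij
  · exact le_of_eq (by linear_combination S i i * abs_mul_abs_self (x i))
  · nlinarith [hoff i j hij, le_abs_self (x i * x j), abs_mul (x i) (x j)]

theorem mulVec_abs_eq_smul (hS : S.IsHermitian) (hoff : ∀ i j, i ≠ j → S i j ≤ 0)
    (hb : ∀ μ, IsEigen S μ → b ≤ μ) (hx : S *ᵥ x = b • x) : S *ᵥ |x| = b • |x| := by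
  refine mulVec_eq_smul_of_dotProduct_mulVec_le hS hb ?_
  have habs : |x| ⬝ᵥ |x| = x ⬝ᵥ x := by
    simp only [dotProduct, Pi.abs_apply, abs_mul_abs_self]
  calc |x| ⬝ᵥ S *ᵥ |x| ≤ x ⬝ᵥ S *ᵥ x := abs_dotProduct_mulVec_abs_le hoff x
    _ = b * (|x| ⬝ᵥ |x|) := by rw [hx, dotProduct_smul, smul_eq_mul, habs]

theorem eq_zero_of_mulVec_eq_smul_of_neg (hoff : ∀ i j, i ≠ j → S i j ≤ 0)
    (hx : S *ᵥ x = b • x) (hx0 : 0 ≤ x) {i j : Fin n} (hi : x i = 0) (hij : S i j < 0) :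
    x j = 0 := by
  have hrow : ∑ k, S i k * x k = 0 := by
    simpa [mulVec, dotProduct, hi] using congrFun hx i
  have hterm : ∀ k ∈ Finset.univ, S i k * x k ≤ 0 := fun k _ => by
    rcases eq_or_ne i k with rfl | hik
    · rw [hi, mul_zero]
    · exact mul_nonpos_of_nonpos_of_nonneg (hoff i k hik) (hx0 k)
  have := (Finset.sum_eq_zero_iff_of_nonpos hterm).mp hrow j (Finset.mem_univ j)
  exact (mul_eq_zero.mp this).resolve_left hij.ne

theorem pos_of_nonneg_of_mulVec_eq_smul (hoff : ∀ i j, i ≠ j → S i j ≤ 0)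
    (hadj : ∀ i j : Fin n, (i : ℕ) + 1 = j → S i j < 0 ∧ S j i < 0)
    (hx : S *ᵥ x = b • x) (hx0 : 0 ≤ x) (hne : x ≠ 0) (i : Fin n) : 0 < x i := by
  refine (hx0 i).lt_of_ne fun hi => hne ?_
  have hstep : ∀ m (h : m + 1 < n), x ⟨m, by omega⟩ = 0 ↔ x ⟨m + 1, h⟩ = 0 := fun m h =>
    ⟨fun h0 => eq_zero_of_mulVec_eq_smul_of_neg hoff hx hx0 h0 (hadj _ ⟨m + 1, h⟩ rfl).1,
     fun h1 => eq_zero_of_mulVec_eq_smul_of_neg hoff hx hx0 h1 (hadj ⟨m, by omega⟩ _ rfl).2⟩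
  have hchain : ∀ m (hm : m < n), x ⟨m, hm⟩ = 0 ↔ x ⟨0, by omega⟩ = 0 := by
    intro m
    induction m with
    | zero => exact fun _ => Iff.rfl
    | succ m ih => exact fun hm => (hstep m hm).symm.trans (ih (by omega))
  have hx00 : x ⟨0, by have := i.isLt; omega⟩ = 0 := (hchain i i.isLt).mp hi.symm
  exact funext fun j => (hchain j j.isLt).mpr hx00

theorem pos_of_mulVec_eq_smul_of_pos (hS : S.IsHermitian) (hoff : ∀ i j, i ≠ j → S i j ≤ 0)
    (hadj : ∀ i j : Fin n, (i : ℕ) + 1 = j → S i j < 0 ∧ S j i < 0)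
    (hb : ∀ μ, IsEigen S μ → b ≤ μ) (hx : S *ᵥ x = b • x) {i : Fin n} (hi : 0 < x i)
    (j : Fin n) : 0 < x j := by
  have hdiff : S *ᵥ (|x| - x) = b • (|x| - x) := by
    rw [mulVec_sub, mulVec_abs_eq_smul hS hoff hb hx, hx, smul_sub]
  have hdiff0 : 0 ≤ |x| - x := sub_nonneg.mpr (le_abs_self x)
  have habs : |x| = x := by
    by_contra hne
    have := pos_of_nonneg_of_mulVec_eq_smul hoff hadj hdiff hdiff0 (sub_ne_zero.mpr hne) i
    simp [abs_of_pos hi] at this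
  have hx0 : x ≠ 0 := fun h0 => by simp [h0] at hi
  exact pos_of_nonneg_of_mulVec_eq_smul hoff hadj hx (habs ▸ abs_nonneg x) hx0 j

theorem forall_pos_or_forall_neg_of_mulVec_eq_smul (hS : S.IsHermitian)
    (hoff : ∀ i j, i ≠ j → S i j ≤ 0)
    (hadj : ∀ i j : Fin n, (i : ℕ) + 1 = j → S i j < 0 ∧ S j i < 0)
    (hb : ∀ μ, IsEigen S μ → b ≤ μ) (hx : S *ᵥ x = b • x) (hne : x ≠ 0) :
    (∀ i, 0 < x i) ∨ ∀ i, x i < 0 := by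
  obtain ⟨i, hi⟩ := Function.ne_iff.mp hne
  rcases hi.lt_or_gt with hneg | hpos
  · have hx' : S *ᵥ -x = b • -x := by rw [mulVec_neg, hx, smul_neg]
    exact Or.inr fun j => neg_pos.mp
      (pos_of_mulVec_eq_smul_of_pos hS hoff hadj hb hx' (neg_pos.mpr hneg) j)
  · exact Or.inl (pos_of_mulVec_eq_smul_of_pos hS hoff hadj hb hx hpos)

end GroundState

theorem pos_and_isEigen_mul_transpose {m k : ℕ} {C : Matrix (Fin m) (Fin k) ℝ}
    (hC : ∀ ε, C *ᵥ ε = 0 → ε = 0) {ν : ℝ} (h : IsEigen (Cᵀ * C) ν) :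
    0 < ν ∧ IsEigen (C * Cᵀ) ν := by
  obtain ⟨ε, hε0, hε⟩ := h
  have hCε : C *ᵥ ε ≠ 0 := fun h0 => hε0 (hC ε h0)
  have hself : ∀ {p} (y : Fin p → ℝ), y ≠ 0 → 0 < y ⬝ᵥ y := fun y hy =>
    (Finset.sum_nonneg fun i _ => mul_self_nonneg (y i)).lt_of_ne
      (Ne.symm (dotProduct_self_eq_zero.not.mpr hy))
  have hform : ν * (ε ⬝ᵥ ε) = C *ᵥ ε ⬝ᵥ C *ᵥ ε := by
    rw [← smul_eq_mul, ← dotProduct_smul, ← hε, ← mulVec_mulVec, dotProduct_mulVec,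
      vecMul_transpose]
  refine ⟨pos_of_mul_pos_left (hform ▸ hself _ hCε) (hself ε hε0).le, C *ᵥ ε, hCε, ?_⟩
  rw [mulVec_mulVec, Matrix.mul_assoc, ← mulVec_mulVec, hε, mulVec_smul]

theorem sum_mul_nonneg_of_sign_change {ι : Type*} [Fintype ι] [LinearOrder ι] {w d : ι → ℝ}
    (hw : Monotone w) (hd : ∑ i, d i = 0) (hcross : ∀ i j, i ≤ j → 0 < d i → 0 ≤ d j) :
    0 ≤ ∑ i, w i * d i := by
  by_cases hpos : ∃ i, 0 < d i
  · obtain ⟨K, hK, hmin⟩ := WellFounded.has_min wellFounded_lt {i | 0 < d i} hpos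
    have hterm : ∀ i, 0 ≤ (w i - w K) * d i := fun i => by
      rcases le_or_gt K i with hKi | hiK
      · exact mul_nonneg (sub_nonneg.mpr (hw hKi)) (hcross K i hKi hK)
      · exact mul_nonneg_of_nonpos_of_nonpos (sub_nonpos.mpr (hw hiK.le))
          (not_lt.mp fun h => hmin i h hiK)
    calc 0 ≤ ∑ i, (w i - w K) * d i := Finset.sum_nonneg fun i _ => hterm i
      _ = ∑ i, w i * d i := by
        simp only [sub_mul, Finset.sum_sub_distrib, ← Finset.mul_sum, hd, mul_zero, sub_zero]
  · simp only [not_exists, not_lt] at hpos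
    have hzero := (Finset.sum_eq_zero_iff_of_nonpos fun i _ => hpos i).mp hd
    simp [hzero]

theorem sum_mul_sq_sub_sq_nonneg {ι : Type*} [Fintype ι] [LinearOrder ι] [OrderBot ι]
    {w u v : ι → ℝ} (hw : Monotone w) (hv : ∀ i, 0 < v i) (hr : Antitone (u / v))
    (hbot : u ⊥ ^ 2 ≤ v ⊥ ^ 2) (hsum : ∑ i, u i ^ 2 = ∑ i, v i ^ 2) :
    0 ≤ ∑ i, w i * (u i ^ 2 - v i ^ 2) := by
  have hr' : ∀ {i j}, i ≤ j → u j / v j ≤ u i / v i := fun hij => hr hij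
  have hle : ∀ i, u i ≤ v i := fun i => by
    have h1 : u ⊥ / v ⊥ ≤ 1 := (div_le_one (hv ⊥)).mpr (le_of_sq_le_sq hbot (hv ⊥).le)
    exact (div_le_one (hv i)).mp ((hr' bot_le).trans h1)
  have hneg : ∀ i, 0 < u i ^ 2 - v i ^ 2 ↔ u i / v i < -1 := fun i => by
    rw [div_lt_iff₀ (hv i)]
    constructor
    · intro h; nlinarith [hle i, hv i]
    · intro h; nlinarith [hv i]
  refine sum_mul_nonneg_of_sign_change hw (by rw [Finset.sum_sub_distrib, hsum, sub_self])
    fun i j hij hi => ((hneg j).mpr ((hr' hij).trans_lt ((hneg i).mp hi))).le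

theorem Fin.sum_ite_val_eq {m : ℕ} (a : ℕ) (f : Fin m → ℝ) :
    (∑ k : Fin m, if (k : ℕ) = a then f k else 0) = if h : a < m then f ⟨a, h⟩ else 0 := by
  split_ifs with h
  · rw [Finset.sum_eq_single ⟨a, h⟩ (fun k _ hk => if_neg fun hka => hk (Fin.ext hka))
      (by simp)]
    simp
  · exact Finset.sum_eq_zero fun k _ => if_neg (by omega)

section Path

variable {n : ℕ}

def pathIncidence (n : ℕ) : Matrix (Fin (n + 1)) (Fin n) ℝ :=
  of fun i k => if (i : ℕ) = k then 1 else if (i : ℕ) = k + 1 then -1 else 0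

theorem pathIncidence_transpose_mulVec (y : Fin (n + 1) → ℝ) (k : Fin n) :
    ((pathIncidence n)ᵀ *ᵥ y) k = y k.castSucc - y k.succ := by
  have hterm : ∀ i : Fin (n + 1), pathIncidence n i k * y i =
      (if (i : ℕ) = k then y i else 0) - if (i : ℕ) = k + 1 then y i else 0 := fun i => by
    simp only [pathIncidence, of_apply]
    split_ifs <;> first | omega | ring
  simp only [mulVec, dotProduct, transpose_apply, hterm, Finset.sum_sub_distrib,
    Fin.sum_ite_val_eq, dif_pos (Nat.lt_succ_of_lt k.isLt), dif_pos (Nat.succ_lt_succ k.isLt)]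
  rfl

theorem pathIncidence_mulVec (z : Fin n → ℝ) (i : Fin (n + 1)) :
    (pathIncidence n *ᵥ z) i =
      (if h : (i : ℕ) < n then z ⟨i, h⟩ else 0) -
        if h : 0 < (i : ℕ) then z ⟨i - 1, by omega⟩ else 0 := by
  have hterm : ∀ k : Fin n, pathIncidence n i k * z k =
      (if (k : ℕ) = i then z k else 0) - if 0 < (i : ℕ) ∧ (k : ℕ) = i - 1 then z k else 0 :=
    fun k => by
      simp only [pathIncidence, of_apply]
      split_ifs <;> first | omega | ring
  simp only [mulVec, dotProduct, hterm, Finset.sum_sub_distrib, Fin.sum_ite_val_eq]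
  congr 1
  by_cases hi : 0 < (i : ℕ)
  · simp only [hi, true_and, dite_true, Fin.sum_ite_val_eq,
      dif_pos (show (i : ℕ) - 1 < n by omega)]
  · simp [hi]

theorem pathH_mulVec (W : ℕ → ℝ) (x : Fin (n + 1) → ℝ) (i : Fin (n + 1)) :
    (pathH (n + 1) W *ᵥ x) i =
      ((if (i : ℕ) = 0 ∨ (i : ℕ) = n then 1 else 2) + W ((i : ℕ) + 1)) * x i -
        (if h : 0 < (i : ℕ) then x ⟨i - 1, by omega⟩ else 0) -
        if h : (i : ℕ) < n then x ⟨i + 1, by omega⟩ else 0 := by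
  have hterm : ∀ j : Fin (n + 1), pathH (n + 1) W i j * x j =
      ((if (j : ℕ) = i then
          ((if (i : ℕ) = 0 ∨ (i : ℕ) = n then 1 else 2) + W ((i : ℕ) + 1)) * x j else 0) -
        if 0 < (i : ℕ) ∧ (j : ℕ) = i - 1 then x j else 0) -
        if (j : ℕ) = i + 1 then x j else 0 := fun j => by
    simp only [pathH, of_apply, Fin.ext_iff, Nat.add_sub_cancel]
    split_ifs <;> first | omega | ring
  simp only [mulVec, dotProduct, hterm, Finset.sum_sub_distrib, Fin.sum_ite_val_eq,
    dif_pos i.isLt, add_lt_add_iff_right]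
  congr 2
  by_cases hi : 0 < (i : ℕ)
  · simp only [hi, true_and, dite_true, Fin.sum_ite_val_eq,
      dif_pos (show (i : ℕ) - 1 < n + 1 by omega)]
  · simp [hi]

theorem pathH_isHermitian (N : ℕ) (W : ℕ → ℝ) : (pathH N W).IsHermitian := by
  ext i j
  simp only [conjTranspose_apply, star_trivial, pathH, of_apply, eq_comm (a := i)]
  split_ifs <;> first | rfl | omega | (subst_vars; rfl)

theorem pathH_apply_nonpos {N : ℕ} (W : ℕ → ℝ) {i j : Fin N} (hij : i ≠ j) :
    pathH N W i j ≤ 0 := by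
  simp only [pathH, of_apply, if_neg hij]
  split_ifs <;> norm_num

theorem pathH_apply_neg_of_succ {N : ℕ} (W : ℕ → ℝ) {i j : Fin N} (hij : (i : ℕ) + 1 = j) :
    pathH N W i j < 0 ∧ pathH N W j i < 0 := by
  simp only [pathH, of_apply, Fin.ext_iff]
  constructor <;> split_ifs <;> first | omega | norm_num

noncomputable def groundStateFactor (v : Fin (n + 1) → ℝ) : Matrix (Fin (n + 1)) (Fin n) ℝ :=
  diagonal v⁻¹ * pathIncidence n * diagonal fun k : Fin n => √(v k.castSucc * v k.succ)

variable {v : Fin (n + 1) → ℝ}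

theorem groundStateFactor_apply (i : Fin (n + 1)) (k : Fin n) :
    groundStateFactor v i k = (v i)⁻¹ * pathIncidence n i k * √(v k.castSucc * v k.succ) := by
  rw [groundStateFactor, mul_diagonal, diagonal_mul, Pi.inv_apply]

theorem groundStateFactor_mulVec (ε : Fin n → ℝ) :
    groundStateFactor v *ᵥ ε =
      v⁻¹ * pathIncidence n *ᵥ fun k => √(v k.castSucc * v k.succ) * ε k := by
  ext i
  rw [groundStateFactor, ← mulVec_mulVec, ← mulVec_mulVec, mulVec_diagonal, Pi.mul_apply]
  congr 2
  ext k
  rw [mulVec_diagonal]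

theorem groundStateFactor_transpose_mulVec (x : Fin (n + 1) → ℝ) (k : Fin n) :
    ((groundStateFactor v)ᵀ *ᵥ x) k =
      √(v k.castSucc * v k.succ) * (x k.castSucc / v k.castSucc - x k.succ / v k.succ) := by
  rw [groundStateFactor, transpose_mul, transpose_mul, diagonal_transpose, diagonal_transpose,
    ← mulVec_mulVec, ← mulVec_mulVec, mulVec_diagonal, pathIncidence_transpose_mulVec]
  simp only [mulVec_diagonal, Pi.inv_apply, div_eq_inv_mul]

theorem groundStateFactor_mul_transpose {W : ℕ → ℝ} {l : ℝ} (hvpos : ∀ i, 0 < v i)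
    (hv : pathH (n + 1) W *ᵥ v = l • v) :
    groundStateFactor v * (groundStateFactor v)ᵀ = pathH (n + 1) W - l • 1 := by
  refine ext_iff_mulVec.mpr fun x => ?_
  ext i
  have hvi := congrFun hv i
  have hsq : ∀ k : Fin n, √(v k.castSucc * v k.succ) * √(v k.castSucc * v k.succ) =
      v k.castSucc * v k.succ := fun k =>
    Real.mul_self_sqrt (mul_pos (hvpos _) (hvpos _)).le
  rw [← mulVec_mulVec, groundStateFactor_mulVec, sub_mulVec, smul_mulVec, one_mulVec]
  simp only [groundStateFactor_transpose_mulVec, ← mul_assoc, hsq, Pi.mul_apply, Pi.sub_apply,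
    Pi.smul_apply, Pi.inv_apply, pathIncidence_mulVec, pathH_mulVec, smul_eq_mul] at hvi ⊢
  have hv0 : ∀ j, v j ≠ 0 := fun j => (hvpos j).ne'
  by_cases h0 : 0 < (i : ℕ) <;> by_cases hn : (i : ℕ) < n
  all_goals simp only [h0, hn, dite_true, dite_false, Fin.castSucc_mk, Fin.succ_mk, Fin.eta]
    at hvi ⊢
  all_goals try simp only [Nat.sub_add_cancel h0, Fin.eta] at hvi ⊢
  all_goals
    generalize ((if (i : ℕ) = 0 ∨ (i : ℕ) = n then 1 else 2) + W ((i : ℕ) + 1)) = c at hvi ⊢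
    -- the diagonal terms match because of row `i` of `H v = l v`
    linear_combination (norm := skip) (-(x i / v i)) * hvi
    field_simp [hv0]
    ring

theorem pathIncidence_mul_pathIncidence_nonpos (i : Fin (n + 1)) {k l : Fin n} (hkl : k ≠ l) :
    pathIncidence n i k * pathIncidence n i l ≤ 0 := by
  rw [Ne, Fin.ext_iff] at hkl
  simp only [pathIncidence, of_apply]
  split_ifs <;> first | omega | norm_num

theorem groundStateFactor_transpose_mul_self_apply (k l : Fin n) :
    ((groundStateFactor v)ᵀ * groundStateFactor v) k l =
      ∑ i, (v i)⁻¹ ^ 2 * (√(v k.castSucc * v k.succ) * √(v l.castSucc * v l.succ)) *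
        (pathIncidence n i k * pathIncidence n i l) := by
  simp only [mul_apply, transpose_apply, groundStateFactor_apply]
  exact Finset.sum_congr rfl fun i _ => by ring

theorem groundStateFactor_transpose_mul_self_apply_nonpos {k l : Fin n} (hkl : k ≠ l) :
    ((groundStateFactor v)ᵀ * groundStateFactor v) k l ≤ 0 := by
  rw [groundStateFactor_transpose_mul_self_apply]
  exact Finset.sum_nonpos fun i _ => mul_nonpos_of_nonneg_of_nonpos (by positivity)
    (pathIncidence_mul_pathIncidence_nonpos i hkl)

theorem groundStateFactor_transpose_mul_self_apply_neg (hvpos : ∀ i, 0 < v i) {k l : Fin n}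
    (hkl : (k : ℕ) + 1 = l) :
    ((groundStateFactor v)ᵀ * groundStateFactor v) k l < 0 ∧
      ((groundStateFactor v)ᵀ * groundStateFactor v) l k < 0 := by
  have hsymm : ((groundStateFactor v)ᵀ * groundStateFactor v)ᵀ =
      (groundStateFactor v)ᵀ * groundStateFactor v := by
    rw [transpose_mul, transpose_transpose]
  have hkl' : k ≠ l := fun h => by rw [h] at hkl; omega
  have hneg : ((groundStateFactor v)ᵀ * groundStateFactor v) k l < 0 := by
    have hB : pathIncidence n k.succ k * pathIncidence n k.succ l = -1 := by
      simp only [pathIncidence, of_apply, Fin.val_succ]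
      split_ifs <;> first | omega | norm_num
    have hw : ∀ j : Fin n, 0 < √(v j.castSucc * v j.succ) := fun j =>
      Real.sqrt_pos.mpr (mul_pos (hvpos _) (hvpos _))
    rw [groundStateFactor_transpose_mul_self_apply]
    refine (Finset.sum_lt_sum (g := fun _ => (0 : ℝ)) (fun i _ => ?_)
      ⟨k.succ, Finset.mem_univ _, ?_⟩).trans_eq Finset.sum_const_zero
    · exact mul_nonpos_of_nonneg_of_nonpos (by positivity)
        (pathIncidence_mul_pathIncidence_nonpos i hkl')
    · rw [hB, mul_neg_one, neg_lt_zero]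
      exact mul_pos (pow_pos (inv_pos.mpr (hvpos _)) 2) (mul_pos (hw k) (hw l))
  exact ⟨hneg, by rwa [← hsymm, transpose_apply]⟩

theorem pathIncidence_mulVec_eq_zero {z : Fin n → ℝ} (h : pathIncidence n *ᵥ z = 0) :
    z = 0 := by
  have hrow : ∀ m (hm : m < n), z ⟨m, hm⟩ = if h : 0 < m then z ⟨m - 1, by omega⟩ else 0 :=
    fun m hm => by
      have := congrFun h ⟨m, by omega⟩
      rw [pathIncidence_mulVec] at this
      simpa [hm, sub_eq_zero] using this
  have hzero : ∀ m (hm : m < n), z ⟨m, hm⟩ = 0 := by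
    intro m
    induction m with
    | zero => exact fun hm => by simpa using hrow 0 hm
    | succ m ih => exact fun hm => by simpa [ih (by omega)] using hrow (m + 1) hm
  exact funext fun k => hzero k k.isLt

theorem groundStateFactor_mulVec_eq_zero (hvpos : ∀ i, 0 < v i) {ε : Fin n → ℝ}
    (h : groundStateFactor v *ᵥ ε = 0) : ε = 0 := by
  rw [groundStateFactor_mulVec] at h
  have hB := pathIncidence_mulVec_eq_zero <| funext fun i =>
    (mul_eq_zero.mp (congrFun h i)).resolve_left (inv_ne_zero (hvpos i).ne')
  refine funext fun k => (mul_eq_zero.mp (congrFun hB k)).resolve_left ?_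
  exact (Real.sqrt_pos.mpr (mul_pos (hvpos _) (hvpos _))).ne'

end Path

section Main

variable {n : ℕ} {W : ℕ → ℝ} {l1 l2 : ℝ} {u v : Fin (n + 1) → ℝ}

theorem strictAnti_div_of_groundStateFactor_transpose_mulVec_pos
    (hδ : ∀ k, 0 < ((groundStateFactor v)ᵀ *ᵥ u) k) : StrictAnti (u / v) := by
  refine Fin.strictAnti_iff_succ_lt.mpr fun k => ?_
  have := hδ k
  rw [groundStateFactor_transpose_mulVec] at this
  exact sub_pos.mp (pos_of_mul_pos_right this (Real.sqrt_nonneg _))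

theorem pathH_strictAnti_div (h : TwoSmallest (pathH (n + 1) W) l1 l2)
    (hv : pathH (n + 1) W *ᵥ v = l1 • v) (hvpos : ∀ i, 0 < v i)
    (hu : pathH (n + 1) W *ᵥ u = l2 • u) (hu0 : u ≠ 0) :
    StrictAnti (u / v) ∨ StrictAnti (-u / v) := by
  obtain ⟨-, -, hl12, hmin⟩ := h
  set C := groundStateFactor v
  have hCC : C * Cᵀ = pathH (n + 1) W - l1 • 1 := groundStateFactor_mul_transpose hvpos hv
  have hTb : ∀ ν, IsEigen (Cᵀ * C) ν → l2 - l1 ≤ ν := fun ν hν => by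
    obtain ⟨hν0, y, hy0, hy⟩ :=
      pos_and_isEigen_mul_transpose (fun _ => groundStateFactor_mulVec_eq_zero hvpos) hν
    rw [hCC, sub_mulVec, smul_mulVec, one_mulVec, sub_eq_iff_eq_add, ← add_smul] at hy
    linarith [(hmin _ ⟨y, hy0, hy⟩).2 (by linarith)]
  have hgap : (pathH (n + 1) W - l1 • 1) *ᵥ u = (l2 - l1) • u := by
    rw [sub_mulVec, smul_mulVec, one_mulVec, hu, sub_smul]
  have hδ : (Cᵀ * C) *ᵥ (Cᵀ *ᵥ u) = (l2 - l1) • (Cᵀ *ᵥ u) := by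
    rw [mulVec_mulVec, Matrix.mul_assoc, hCC, ← mulVec_mulVec, hgap, mulVec_smul]
  have hδ0 : Cᵀ *ᵥ u ≠ 0 := fun h0 => by
    have := congrArg (C *ᵥ ·) h0
    simp only [mulVec_mulVec, hCC, hgap, mulVec_zero, smul_eq_zero] at this
    exact this.elim (fun h => by linarith) hu0
  have hTsymm : (Cᵀ * C).IsHermitian := by
    simpa [conjTranspose_eq_transpose_of_trivial] using isHermitian_conjTranspose_mul_self C
  rcases forall_pos_or_forall_neg_of_mulVec_eq_smul hTsymm
      (fun _ _ => groundStateFactor_transpose_mul_self_apply_nonpos)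
      (fun _ _ => groundStateFactor_transpose_mul_self_apply_neg hvpos) hTb hδ hδ0
    with hpos | hneg
  · exact Or.inl (strictAnti_div_of_groundStateFactor_transpose_mulVec_pos hpos)
  · refine Or.inr (strictAnti_div_of_groundStateFactor_transpose_mulVec_pos fun k => ?_)
    rw [mulVec_neg, Pi.neg_apply, neg_pos]
    exact hneg k

theorem pathH_sum_mul_sq_sub_sq_nonneg {u1 u2 : Fin (n + 1) → ℝ}
    (h : TwoSmallest (pathH (n + 1) W) l1 l2)
    (hu1 : pathH (n + 1) W *ᵥ u1 = l1 • u1) (hu2 : pathH (n + 1) W *ᵥ u2 = l2 • u2)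
    (hu10 : u1 ≠ 0) (hu20 : u2 ≠ 0) (hnorm : ∑ i, u2 i ^ 2 = ∑ i, u1 i ^ 2)
    (hfirst : u2 0 ^ 2 ≤ u1 0 ^ 2) {w : Fin (n + 1) → ℝ} (hw : Monotone w) :
    0 ≤ ∑ i, w i * (u2 i ^ 2 - u1 i ^ 2) := by
  obtain ⟨v, hv, hvpos, hvsq⟩ :
      ∃ v, pathH (n + 1) W *ᵥ v = l1 • v ∧ (∀ i, 0 < v i) ∧ ∀ i, v i ^ 2 = u1 i ^ 2 := by
    rcases forall_pos_or_forall_neg_of_mulVec_eq_smul (pathH_isHermitian _ W)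
        (fun _ _ => pathH_apply_nonpos W) (fun _ _ => pathH_apply_neg_of_succ W)
        (fun μ hμ => (h.2.2.2 μ hμ).1) hu1 hu10 with hpos | hneg
    · exact ⟨u1, hu1, hpos, fun _ => rfl⟩
    · exact ⟨-u1, by rw [mulVec_neg, hu1, smul_neg], fun i => neg_pos.mpr (hneg i),
        fun i => neg_sq _⟩
  obtain ⟨u, hr, husq⟩ : ∃ u, Antitone (u / v) ∧ ∀ i, u i ^ 2 = u2 i ^ 2 := by
    rcases pathH_strictAnti_div h hv hvpos hu2 hu20 with hr | hr
    · exact ⟨u2, hr.antitone, fun _ => rfl⟩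
    · exact ⟨-u2, hr.antitone, fun i => neg_sq _⟩
  have := sum_mul_sq_sub_sq_nonneg hw hvpos hr (by rw [husq, hvsq]; exact hfirst)
    (by simp only [husq, hvsq, hnorm])
  simpa only [husq, hvsq] using this

end Main

/-- for `H_{αU}(P_N)` with `α ≥ 0` and unit eigenvectors `u1, u2` of the
two smallest eigenvalues, if `u2 1 ^ 2 ≤ u1 1 ^ 2` (first components) then
`Σ_{i=1}^N (i-1)(u2 i ^ 2 - u1 i ^ 2) ≥ 0`.  (Vertex label `i` is index `i - 1 : Fin N`,
so the coefficient `i - 1` is the value of the `Fin N` index.) -/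
theorem path_linear_simplify (N : ℕ) (hN : 2 ≤ N) (α : ℝ)
    (l1 l2 : ℝ)
    (h : TwoSmallest (pathH N (fun i => α * ((i : ℝ) - 1))) l1 l2)
    (u1 u2 : Fin N → ℝ)
    (hu1 : (pathH N (fun i => α * ((i : ℝ) - 1))).mulVec u1 = l1 • u1)
    (hu1n : ∑ i, u1 i ^ 2 = 1)
    (hu2 : (pathH N (fun i => α * ((i : ℝ) - 1))).mulVec u2 = l2 • u2)
    (hu2n : ∑ i, u2 i ^ 2 = 1)
    (hfirst : u2 ⟨0, by omega⟩ ^ 2 ≤ u1 ⟨0, by omega⟩ ^ 2) :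
    0 ≤ ∑ i : Fin N, (i : ℝ) * (u2 i ^ 2 - u1 i ^ 2) := by
  obtain ⟨n, rfl⟩ : ∃ n, N = n + 1 := ⟨N - 1, by omega⟩
  have hne : ∀ {x : Fin (n + 1) → ℝ}, ∑ i, x i ^ 2 = 1 → x ≠ 0 := fun hx h0 => by
    simp [h0] at hx
  exact pathH_sum_mul_sq_sub_sq_nonneg h hu1 hu2 (hne hu1n) (hne hu2n) (hu2n.trans hu1n.symm)
    hfirst fun i j hij => by exact_mod_cast hij
end

section
/- Let N ≥ 2 and α ≥ 0, and let u(λ_1) be the componentwise-positive unit eigenvector of H_{αU}(P_N) for its smallest eigenvalue λ_1. Then u(λ_1) is a decreasing sequence: u_{i+1}(λ_1) ≤ u_i(λ_1) for all 1 ≤ i ≤ N−1. Moreover, if α > 0, then u(λ_1) is strictly decreasing: u_{i+1}(λ_1) < u_i(λ_1) for all 1 ≤ i ≤ N−1. -/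
noncomputable def extv {N : ℕ} (u : Fin N → ℝ) : ℕ → ℝ :=
  fun k => if h : k < N then u ⟨k, h⟩ else 0

lemma sum_coe_eq {N : ℕ} (g : Fin N → ℝ) (m : ℕ) :
    ∑ j : Fin N, (if (j : ℕ) = m then g j else 0)
      = if h : m < N then g ⟨m, h⟩ else 0 := by
  split_ifs with h
  · rw [Finset.sum_eq_single (⟨m, h⟩ : Fin N)]
    · simp
    · intro b _ hb
      have hbm : (b : ℕ) ≠ m := fun hh => hb (Fin.ext hh)
      simp [hbm]
    · simp
  · apply Finset.sum_eq_zero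
    intro b _
    have hbm : (b : ℕ) ≠ m := fun hh => h (hh ▸ b.isLt)
    simp [hbm]

lemma row_sum {N : ℕ} (u : Fin N → ℝ) (c : ℝ) (i : Fin N) :
    ∑ j : Fin N, (if i = j then c
        else if (i:ℕ)+1 = (j:ℕ) ∨ (j:ℕ)+1 = (i:ℕ) then (-1:ℝ) else 0) * u j
      = c * u i - extv u ((i:ℕ)+1)
        - (if (i:ℕ) = 0 then 0 else extv u ((i:ℕ)-1)) := by
  have key : ∀ j : Fin N,
      (if i = j then c
        else if (i:ℕ)+1 = (j:ℕ) ∨ (j:ℕ)+1 = (i:ℕ) then (-1:ℝ) else 0) * u j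
      = (if (j:ℕ) = (i:ℕ) then c * u i else 0)
        + (if (j:ℕ) = (i:ℕ)+1 then -u j else 0)
        + (if (i:ℕ) ≠ 0 ∧ (j:ℕ) = (i:ℕ)-1 then -u j else 0) := by
    intro j
    by_cases hij : i = j
    · subst hij
      rw [if_pos rfl, if_pos rfl, if_neg (by omega), if_neg (by omega)]
      ring
    · have h0 : (j:ℕ) ≠ (i:ℕ) := fun hh => hij (Fin.ext hh.symm)
      rw [if_neg hij, if_neg h0]
      by_cases h1 : (i:ℕ)+1 = (j:ℕ)
      · rw [if_pos (Or.inl h1), if_pos h1.symm, if_neg (by omega)]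
        ring
      · by_cases h2 : (j:ℕ)+1 = (i:ℕ)
        · rw [if_pos (Or.inr h2), if_neg (by omega), if_pos (by omega)]
          ring
        · rw [if_neg (by tauto), if_neg (by omega), if_neg (by omega)]
          ring
  rw [Finset.sum_congr rfl (fun j _ => key j), Finset.sum_add_distrib,
    Finset.sum_add_distrib]
  have e1 : ∑ j : Fin N, (if (j:ℕ) = (i:ℕ) then c * u i else 0) = c * u i := by
    rw [sum_coe_eq (fun _ => c * u i) (i:ℕ), dif_pos i.isLt]
  have e2 : ∑ j : Fin N, (if (j:ℕ) = (i:ℕ)+1 then -u j else 0)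
      = -extv u ((i:ℕ)+1) := by
    rw [sum_coe_eq (fun j => -u j) ((i:ℕ)+1)]
    unfold extv
    split_ifs <;> simp
  have e3 : ∑ j : Fin N, (if (i:ℕ) ≠ 0 ∧ (j:ℕ) = (i:ℕ)-1 then -u j else 0)
      = -(if (i:ℕ) = 0 then 0 else extv u ((i:ℕ)-1)) := by
    by_cases hi : (i:ℕ) = 0
    · rw [if_pos hi]
      rw [Finset.sum_eq_zero]
      · ring
      · intro b _
        rw [if_neg (by tauto)]
    · rw [if_neg hi]
      have : ∀ j : Fin N, (if (i:ℕ) ≠ 0 ∧ (j:ℕ) = (i:ℕ)-1 then -u j else 0)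
          = (if (j:ℕ) = (i:ℕ)-1 then -u j else 0) := by
        intro j
        by_cases hj : (j:ℕ) = (i:ℕ)-1
        · rw [if_pos ⟨hi, hj⟩, if_pos hj]
        · rw [if_neg (by tauto), if_neg hj]
      rw [Finset.sum_congr rfl (fun j _ => this j),
        sum_coe_eq (fun j => -u j) ((i:ℕ)-1)]
      have hlt : (i:ℕ)-1 < N := by have := i.isLt; omega
      rw [dif_pos hlt]
      unfold extv
      rw [dif_pos hlt]
  rw [e1, e2, e3]
  ring

lemma ground_diff (N : ℕ) (hN : 2 ≤ N) (α l1 : ℝ) (hα : 0 ≤ α)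
    (u : Fin N → ℝ)
    (hrow : ∀ i : ℕ, i < N →
      ((if i = 0 ∨ i = N-1 then (1:ℝ) else 2) + α * i) * extv u i
        - extv u (i+1) - (if i = 0 then 0 else extv u (i-1)) = l1 * extv u i)
    (hpos : ∀ i, 0 < u i) :
    ∀ i, i + 1 < N →
      (0 ≤ extv u i - extv u (i+1)) ∧ (0 < α → 0 < extv u i - extv u (i+1)) := by
  obtain ⟨M, rfl⟩ : ∃ M, N = M + 2 := ⟨N - 2, by omega⟩
  set v : ℕ → ℝ := extv u with hv
  have hvpos : ∀ k, k < M + 2 → 0 < v k := by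
    intro k hk
    rw [hv]
    unfold extv
    rw [dif_pos hk]
    exact hpos _
  set t : ℕ → ℝ := fun k => (l1 - α * k) * v k with ht
  -- forward formula
  have forward : ∀ i, i + 1 < M + 2 →
      v i - v (i+1) = ∑ k ∈ Finset.range (i+1), t k := by
    intro i
    induction i with
    | zero =>
      intro _
      have h0 := hrow 0 (by omega)
      rw [if_pos (Or.inl rfl), if_pos rfl] at h0
      rw [Finset.sum_range_one]
      simp only [ht]
      push_cast at h0 ⊢
      linear_combination h0
    | succ n ih =>
      intro hn
      have hmid := hrow (n+1) (by omega)
      rw [if_neg (by omega), if_neg (by omega)] at hmid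
      have ihn : v n - v (n+1) = ∑ k ∈ Finset.range (n+1), t k := ih (by omega)
      rw [Finset.sum_range_succ, ← ihn]
      simp only [ht]
      have : (n:ℕ)+1-1 = n := by omega
      rw [this] at hmid
      push_cast at hmid ⊢
      linear_combination hmid
  -- endpoint equation
  have endrow : v (M+1) - v M = t (M+1) := by
    have hend := hrow (M+1) (by omega)
    rw [if_pos (Or.inr (by omega)), if_neg (by omega)] at hend
    have hz : v (M+1+1) = 0 := by
      rw [hv]; unfold extv; rw [dif_neg (by omega)]
    have : (M+1)-1 = M := by omega
    rw [this, hz] at hend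
    simp only [ht]
    push_cast at hend ⊢
    linear_combination hend
  -- total sum is zero
  have total : ∑ k ∈ Finset.range (M+2), t k = 0 := by
    rw [Finset.sum_range_succ, ← forward M (by omega)]
    linarith [endrow]
  -- backward formula
  have backward : ∀ i, i + 1 < M + 2 →
      v i - v (i+1) = -∑ k ∈ Finset.Ico (i+1) (M+2), t k := by
    intro i hi
    have hsplit := Finset.sum_range_add_sum_Ico t (show i+1 ≤ M+2 by omega)
    rw [forward i hi]
    linarith [total, hsplit]
  intro i hi
  by_cases hc : α * i < l1
  · have hstrict : 0 < v i - v (i+1) := by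
      rw [forward i hi]
      apply Finset.sum_pos
      · intro k hk
        rw [Finset.mem_range] at hk
        have hk' : (k:ℝ) ≤ (i:ℝ) := by exact_mod_cast Nat.lt_succ_iff.mp hk
        have h1 : α * k ≤ α * i := by nlinarith
        have h2 : 0 < v k := hvpos k (by omega)
        simp only [ht]
        nlinarith
      · exact ⟨0, Finset.mem_range.mpr (by omega)⟩
    exact ⟨le_of_lt hstrict, fun _ => hstrict⟩
  · push_neg at hc
    have hweak : ∀ k ∈ Finset.Ico (i+1) (M+2), t k ≤ 0 := by
      intro k hk
      rw [Finset.mem_Ico] at hk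
      have hk' : (i:ℝ) ≤ (k:ℝ) := by exact_mod_cast (by omega : i ≤ k)
      have h1 : α * i ≤ α * k := by nlinarith
      have h2 : 0 < v k := hvpos k hk.2
      simp only [ht]
      nlinarith
    constructor
    · rw [backward i hi]
      have := Finset.sum_nonpos hweak
      linarith
    · intro hαpos
      rw [backward i hi]
      have hstr : ∀ k ∈ Finset.Ico (i+1) (M+2), t k < 0 := by
        intro k hk
        rw [Finset.mem_Ico] at hk
        have hk' : (i:ℝ) + 1 ≤ (k:ℝ) := by exact_mod_cast (by omega : i + 1 ≤ k)
        have h1 : α * i < α * k := by nlinarith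
        have h2 : 0 < v k := hvpos k hk.2
        simp only [ht]
        nlinarith
      have hne : (Finset.Ico (i+1) (M+2)).Nonempty :=
        ⟨i+1, Finset.mem_Ico.mpr ⟨le_refl _, hi⟩⟩
      have := Finset.sum_neg hstr hne
      linarith

/-- the componentwise-positive unit ground-state eigenvector of
`H_{αU}(P_N)` (with `α ≥ 0` and `U_i = i - 1`) is decreasing, and strictly
decreasing when `α > 0`. -/
theorem path_ground_state_decreasing (N : ℕ) (hN : 2 ≤ N) (α : ℝ) (hα : 0 ≤ α)
    (l1 : ℝ)
    (hev : IsEigen (pathH N (fun i => α * ((i : ℝ) - 1))) l1)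
    (hmin : ∀ μ, IsEigen (pathH N (fun i => α * ((i : ℝ) - 1))) μ → l1 ≤ μ)
    (u : Fin N → ℝ)
    (hu : (pathH N (fun i => α * ((i : ℝ) - 1))).mulVec u = l1 • u)
    (hpos : ∀ i, 0 < u i) (hun : ∑ i, u i ^ 2 = 1) :
    (∀ i j : Fin N, (j : ℕ) = (i : ℕ) + 1 → u j ≤ u i) ∧
    (0 < α → ∀ i j : Fin N, (j : ℕ) = (i : ℕ) + 1 → u j < u i) := by
  have hrow : ∀ i : ℕ, i < N →
      ((if i = 0 ∨ i = N-1 then (1:ℝ) else 2) + α * i) * extv u i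
        - extv u (i+1) - (if i = 0 then 0 else extv u (i-1)) = l1 * extv u i := by
    intro i hi
    have h := congrFun hu ⟨i, hi⟩
    rw [Matrix.mulVec, dotProduct] at h
    simp only [pathH, Matrix.of_apply] at h
    rw [row_sum u ((if ((⟨i, hi⟩ : Fin N) : ℕ) = 0 ∨ ((⟨i, hi⟩ : Fin N) : ℕ) = N - 1
        then (1:ℝ) else 2) + α * (((((⟨i, hi⟩ : Fin N) : ℕ) + 1 : ℕ) : ℝ) - 1))
      (⟨i, hi⟩ : Fin N)] at h
    have hxi : extv u i = u ⟨i, hi⟩ := by unfold extv; rw [dif_pos hi]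
    have hcast : ((((i : ℕ) + 1 : ℕ) : ℝ) - 1) = (i : ℝ) := by push_cast; ring
    simp only [Pi.smul_apply, smul_eq_mul] at h
    rw [hxi]
    rw [hcast] at h
    exact h
  have key := ground_diff N hN α l1 hα u hrow hpos
  constructor
  · intro i j hij
    have hi : (i : ℕ) + 1 < N := hij ▸ j.isLt
    have hk := (key i hi).1
    have h1 : extv u (i : ℕ) = u i := by unfold extv; rw [dif_pos i.isLt]
    have h2 : extv u ((i : ℕ) + 1) = u j := by
      unfold extv; rw [dif_pos hi]
      congr 1
      exact Fin.ext hij.symm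
    rw [h1, h2] at hk
    linarith
  · intro hαpos i j hij
    have hi : (i : ℕ) + 1 < N := hij ▸ j.isLt
    have hk := (key i hi).2 hαpos
    have h1 : extv u (i : ℕ) = u i := by unfold extv; rw [dif_pos i.isLt]
    have h2 : extv u ((i : ℕ) + 1) = u j := by
      unfold extv; rw [dif_pos hi]
      congr 1
      exact Fin.ext hij.symm
    rw [h1, h2] at hk
    linarith
end

section
/- Let N ≥ 2, α, λ ∈ ℝ, and let (u_i)_{i=0}^{N+1} be a real sequence satisfying (2 + α(i−1) − λ)u_i = u_{i−1} + u_{i+1} for all 1 ≤ i ≤ N. For ε ∈ [0,1] write u_{k+ε} = ε·u_{k+1} + (1−ε)·u_k. Then for every i ∈ {1,…,N−1} with u_i·u_{i+1} > 0 and every ε ∈ [0,1], there exists j ∈ [i, i+1] such that u_{i+1+ε} = (2 + α(j−1) − λ)·u_{i+ε} − u_{i−1+ε}. -/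
/-! Subtracting the recurrences at `i` and `i + 1`, weighted by `1 - ε` and `ε`, leaves the
potential evaluated at the weighted mean of `i - 1` and `i` with weights `(1 - ε) u_i` and
`ε u_{i+1}`. Since `u_i u_{i+1} > 0` these weights have the same sign and a nonzero sum, so the
mean lies in `[i - 1, i]` and `j` is one plus it. -/

open Set

section WeightedMean

variable {K : Type*} [Field K] [LinearOrder K] [IsStrictOrderedRing K]

theorem weightedMean_mem_Icc_of_nonneg {w₁ w₂ a b : K} (hw₁ : 0 ≤ w₁) (hw₂ : 0 ≤ w₂)
    (hsum : 0 < w₁ + w₂) (hab : a ≤ b) :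
    (w₁ * a + w₂ * b) / (w₁ + w₂) ∈ Icc a b := by
  rw [mem_Icc, le_div_iff₀ hsum, div_le_iff₀ hsum]
  constructor <;>
    nlinarith [mul_le_mul_of_nonneg_left hab hw₁, mul_le_mul_of_nonneg_left hab hw₂]

theorem weightedMean_mem_Icc {w₁ w₂ a b : K} (hw : 0 ≤ w₁ * w₂) (hsum : w₁ + w₂ ≠ 0)
    (hab : a ≤ b) : (w₁ * a + w₂ * b) / (w₁ + w₂) ∈ Icc a b := by
  rcases hsum.lt_or_gt with hneg | hpos
  · have h := weightedMean_mem_Icc_of_nonneg (w₁ := -w₁) (w₂ := -w₂)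
      (by nlinarith) (by nlinarith) (by linarith) hab
    rwa [show -w₁ * a + -w₂ * b = -(w₁ * a + w₂ * b) by ring,
      show -w₁ + -w₂ = -(w₁ + w₂) by ring, neg_div_neg_eq] at h
  · exact weightedMean_mem_Icc_of_nonneg (by nlinarith) (by nlinarith) hpos hab

theorem convexCombination_ne_zero_of_mul_pos {x y ε : K} (hxy : 0 < x * y) (hε₀ : 0 ≤ ε)
    (hε₁ : ε ≤ 1) : (1 - ε) * x + ε * y ≠ 0 := by
  have hsum : (1 - ε) + ε = 1 := by ring
  rcases mul_pos_iff.mp hxy with ⟨hx, hy⟩ | ⟨hx, hy⟩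
  · exact (convex_Ioi (0 : K) hx hy (by linarith) hε₀ hsum).ne'
  · exact (convex_Iio (0 : K) hx hy (by linarith) hε₀ hsum).ne

end WeightedMean

theorem convex_combination_recurrence_general (N : ℕ) (α lam : ℝ)
    (u : ℕ → ℝ)
    (hrec : ∀ i : ℕ, 1 ≤ i → i ≤ N →
      (2 + α * ((i : ℝ) - 1) - lam) * u i = u (i - 1) + u (i + 1)) :
    ∀ i : ℕ, 1 ≤ i → i ≤ N - 1 → u i * u (i + 1) > 0 →
      ∀ ε : ℝ, 0 ≤ ε → ε ≤ 1 →
        ∃ j : ℝ, (i : ℝ) ≤ j ∧ j ≤ (i : ℝ) + 1 ∧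
          ε * u (i + 2) + (1 - ε) * u (i + 1) =
            (2 + α * (j - 1) - lam) * (ε * u (i + 1) + (1 - ε) * u i) -
              (ε * u i + (1 - ε) * u (i - 1)) := by
  intro i hi₁ hiN hpos ε hε₀ hε₁
  have hrec_i := hrec i hi₁ (by omega)
  have hrec_succ := hrec (i + 1) (by omega) (by omega)
  simp only [Nat.add_sub_cancel, Nat.cast_add, Nat.cast_one, add_sub_cancel_right,
    show i + 1 + 1 = i + 2 from rfl] at hrec_succ
  have hm := convexCombination_ne_zero_of_mul_pos hpos hε₀ hε₁
  have hmean := weightedMean_mem_Icc (a := (i : ℝ) - 1) (b := i)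
    (by nlinarith [mul_nonneg (mul_nonneg (sub_nonneg.mpr hε₁) hε₀) hpos.le]) hm (by linarith)
  refine ⟨1 + ((1 - ε) * u i * ((i : ℝ) - 1) + ε * u (i + 1) * i) /
      ((1 - ε) * u i + ε * u (i + 1)),
    by linarith [hmean.1], by linarith [hmean.2], ?_⟩
  rw [add_sub_cancel_left, add_comm (ε * u (i + 1))]
  field_simp
  linear_combination -ε * hrec_succ - (1 - ε) * hrec_i

/-- for a real sequence satisfying the linear-potential recurrence
`(2 + α(i-1) - λ)u_i = u_{i-1} + u_{i+1}` for `1 ≤ i ≤ N`, and writing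
`u_{k+ε} = ε u_{k+1} + (1-ε) u_k`, for every `i ∈ {1,…,N-1}` with `u_i u_{i+1} > 0`
and every `ε ∈ [0,1]` there is `j ∈ [i, i+1]` with
`u_{i+1+ε} = (2 + α(j-1) - λ) u_{i+ε} - u_{i-1+ε}`. -/
theorem convex_combination_recurrence (N : ℕ) (hN : 2 ≤ N) (α lam : ℝ)
    (u : ℕ → ℝ)
    (hrec : ∀ i : ℕ, 1 ≤ i → i ≤ N →
      (2 + α * ((i : ℝ) - 1) - lam) * u i = u (i - 1) + u (i + 1)) :
    ∀ i : ℕ, 1 ≤ i → i ≤ N - 1 → u i * u (i + 1) > 0 →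
      ∀ ε : ℝ, 0 ≤ ε → ε ≤ 1 →
        ∃ j : ℝ, (i : ℝ) ≤ j ∧ j ≤ (i : ℝ) + 1 ∧
          ε * u (i + 2) + (1 - ε) * u (i + 1) =
            (2 + α * (j - 1) - lam) * (ε * u (i + 1) + (1 - ε) * u i) -
              (ε * u i + (1 - ε) * u (i - 1)) :=
  convex_combination_recurrence_general N α lam u hrec
end

section
/- Let N ≥ 2 and α ≥ 0, and let u = u(λ_2) be the unit eigenvector of H_{αU}(P_N) for its second smallest eigenvalue λ_2, chosen with u_1 > 0 and extended by u_0 = u_1, u_{N+1} = u_N. Let u_m be the unique generalized zero of u and let x ∈ [m, m+1) be the first node of the u-line; assume x ≤ (N+1)/2. For ε ∈ [0,1] write u_{k+ε} = ε·u_{k+1} + (1−ε)·u_k. Then: (a) if m ≤ x ≤ m + 1/2 and ε ∈ [0,1] satisfies u_{m+ε} = −u_{m−1+ε}, then u_{m+k+ε}/u_{m−1−k+ε} ≤ −1 for every k ∈ {0,…,m−1}; (b) if m + 1/2 < x ≤ m + 1 and ε ∈ [0,1] satisfies u_{m+ε} = 0, then u_{m+k+ε}/u_{m−k+ε} ≤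 −1 for every k ∈ {1,…,m}. -/
/-- `x` is a node of the `u`-line of the extended sequence `(u_i)_{i=0}^{N+1}`. -/
def IsNodeOf (N : ℕ) (u : ℕ → ℝ) (x : ℝ) : Prop :=
  ∃ k : ℕ, k ≤ N ∧ (k : ℝ) ≤ x ∧ x ≤ (k : ℝ) + 1 ∧
    ((k : ℝ) + 1 - x) * u k + (x - (k : ℝ)) * u (k + 1) = 0

set_option maxHeartbeats 2000000 in
/-- ordering of `u(λ₂)`: let `u` be the extended unit eigenvector of
`H_{αU}(P_N)` for the second smallest eigenvalue `l2`, with `u 1 > 0`, unique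
generalized zero `u m`, and first node `x ∈ [m, m+1)` with `x ≤ (N+1)/2`.  Writing
`u_{k+ε} = ε u_{k+1} + (1-ε) u_k`:
(a) if `m ≤ x ≤ m + 1/2` and `u_{m+ε} = -u_{m-1+ε}`, then
    `u_{m+k+ε} / u_{m-1-k+ε} ≤ -1` for all `k ∈ {0,…,m-1}`;
(b) if `m + 1/2 < x ≤ m + 1` and `u_{m+ε} = 0`, then
    `u_{m+k+ε} / u_{m-k+ε} ≤ -1` for all `k ∈ {1,…,m}`. -/
theorem path_second_eigenvector_ordering (N : ℕ) (hN : 2 ≤ N) (α : ℝ) (hα : 0 ≤ α)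
    (l1 l2 : ℝ)
    (h : TwoSmallest (pathH N (fun i => α * ((i : ℝ) - 1))) l1 l2)
    (u : ℕ → ℝ)
    (hue : (pathH N (fun i => α * ((i : ℝ) - 1))).mulVec
        (fun i : Fin N => u ((i : ℕ) + 1)) = l2 • fun i : Fin N => u ((i : ℕ) + 1))
    (hun : ∑ i ∈ Finset.Icc 1 N, u i ^ 2 = 1)
    (hu1 : 0 < u 1) (hl : u 0 = u 1) (hr : u (N + 1) = u N)
    (m : ℕ) (hm1 : 1 ≤ m) (hmN : m ≤ N)
    (hgz : u m = 0 ∨ u m * u (m + 1) < 0)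
    (huniq : ∀ k : ℕ, 1 ≤ k → k ≤ N → (u k = 0 ∨ u k * u (k + 1) < 0) → k = m)
    (x : ℝ) (hx1 : (m : ℝ) ≤ x) (hx2 : x < (m : ℝ) + 1)
    (hxnode : ((m : ℝ) + 1 - x) * u m + (x - (m : ℝ)) * u (m + 1) = 0)
    (hxfirst : ∀ y : ℝ, IsNodeOf N u y → x ≤ y)
    (hxhalf : x ≤ ((N : ℝ) + 1) / 2) :
    (((m : ℝ) ≤ x ∧ x ≤ (m : ℝ) + 1 / 2) →
      ∀ ε : ℝ, 0 ≤ ε → ε ≤ 1 →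
        ε * u (m + 1) + (1 - ε) * u m = -(ε * u m + (1 - ε) * u (m - 1)) →
        ∀ k : ℕ, k ≤ m - 1 →
          (ε * u (m + k + 1) + (1 - ε) * u (m + k)) /
            (ε * u (m - k) + (1 - ε) * u (m - 1 - k)) ≤ -1) ∧
    (((m : ℝ) + 1 / 2 < x ∧ x ≤ (m : ℝ) + 1) →
      ∀ ε : ℝ, 0 ≤ ε → ε ≤ 1 →
        ε * u (m + 1) + (1 - ε) * u m = 0 →
        ∀ k : ℕ, 1 ≤ k → k ≤ m →
          (ε * u (m + k + 1) + (1 - ε) * u (m + k)) /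
            (ε * u (m - k + 1) + (1 - ε) * u (m - k)) ≤ -1) := by
  -- The three-term recurrence from the eigenvalue equation
  have hrec : ∀ p : ℕ, 1 ≤ p → p ≤ N → u (p-1) + u (p+1) = (2 + α * ((p:ℝ) - 1) - l2) * u p := by
    have hrow : ∀ i : Fin N,
        ((if (i : ℕ) = 0 ∨ (i : ℕ) = N - 1 then (1:ℝ) else 2) + α * ((((i:ℕ)+1 : ℕ) : ℝ) - 1)) * u ((i:ℕ)+1)
          + (if (i:ℕ)+1 < N then -u ((i:ℕ)+2) else 0)
          + (if 0 < (i:ℕ) then -u (i:ℕ) else 0)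
        = l2 * u ((i:ℕ)+1) := by
      intro i
      have h0 := congrFun hue i
      simp only [Matrix.mulVec, dotProduct, Pi.smul_apply, smul_eq_mul] at h0
      rw [← h0]
      have hpt : ∀ j : Fin N, pathH N (fun i => α * ((i : ℝ) - 1)) i j * u ((j:ℕ)+1) =
          (if j = i then ((if (i:ℕ) = 0 ∨ (i:ℕ) = N-1 then (1:ℝ) else 2) + α * ((((i:ℕ)+1 : ℕ):ℝ) - 1)) * u ((i:ℕ)+1) else 0)
          + (if (j:ℕ) = (i:ℕ)+1 then -u ((j:ℕ)+1) else 0)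
          + (if (j:ℕ)+1 = (i:ℕ) then -u ((j:ℕ)+1) else 0) := by
        intro j
        simp only [pathH, Matrix.of_apply]
        by_cases h1 : i = j
        · subst h1
          rw [if_pos rfl, if_pos rfl,
            if_neg (show ¬((i:ℕ) = (i:ℕ)+1) by omega),
            if_neg (show ¬((i:ℕ)+1 = (i:ℕ)) by omega)]
          ring
        · rw [if_neg h1, if_neg (show ¬(j = i) from fun hc => h1 hc.symm)]
          by_cases h2 : (j:ℕ) = (i:ℕ)+1
          · rw [if_pos (Or.inl h2.symm), if_pos h2,
              if_neg (show ¬((j:ℕ)+1 = (i:ℕ)) by omega)]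
            ring
          · by_cases h3 : (j:ℕ)+1 = (i:ℕ)
            · rw [if_pos (Or.inr h3), if_neg h2, if_pos h3]
              ring
            · rw [if_neg (show ¬((i:ℕ)+1 = (j:ℕ) ∨ (j:ℕ)+1 = (i:ℕ)) by
                rintro (hc|hc)
                · exact h2 hc.symm
                · exact h3 hc), if_neg h2, if_neg h3]
              ring
      rw [Finset.sum_congr rfl (fun j _ => hpt j)]
      rw [Finset.sum_add_distrib, Finset.sum_add_distrib, Finset.sum_ite_eq' Finset.univ i]
      rw [if_pos (Finset.mem_univ i)]
      congr 1
      · congr 1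
        by_cases hc : (i:ℕ)+1 < N
        · have hcond : ∀ j : Fin N, ((j:ℕ) = (i:ℕ)+1) ↔ (j = (⟨(i:ℕ)+1, hc⟩ : Fin N)) := by
            intro j
            rw [Fin.ext_iff]
          rw [if_pos hc,
            Finset.sum_congr rfl (fun j _ => if_congr (hcond j) rfl rfl),
            Finset.sum_ite_eq' Finset.univ (⟨(i:ℕ)+1, hc⟩ : Fin N) (fun j => -u ((j:ℕ)+1)),
            if_pos (Finset.mem_univ _)]
        · rw [if_neg hc, Finset.sum_eq_zero]
          intro j _
          rw [if_neg (show ¬((j:ℕ) = (i:ℕ)+1) by omega)]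
      · by_cases hc : 0 < (i:ℕ)
        · have hlt : (i:ℕ)-1 < N := by omega
          have hcond : ∀ j : Fin N, ((j:ℕ)+1 = (i:ℕ)) ↔ (j = (⟨(i:ℕ)-1, hlt⟩ : Fin N)) := by
            intro j
            rw [Fin.ext_iff]
            simp only [Fin.val_mk]
            omega
          rw [if_pos hc,
            Finset.sum_congr rfl (fun j _ => if_congr (hcond j) rfl rfl),
            Finset.sum_ite_eq' Finset.univ (⟨(i:ℕ)-1, hlt⟩ : Fin N) (fun j => -u ((j:ℕ)+1)),
            if_pos (Finset.mem_univ _)]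
          simp only [Fin.val_mk]
          rw [show (i:ℕ)-1+1 = (i:ℕ) from by omega]
        · rw [if_neg hc, Finset.sum_eq_zero]
          intro j _
          rw [if_neg (show ¬((j:ℕ)+1 = (i:ℕ)) by omega)]
    intro p hp1 hpN
    have hi : p - 1 < N := by omega
    have h0 := hrow ⟨p-1, hi⟩
    simp only [Fin.val_mk] at h0
    rw [show p - 1 + 1 = p from by omega, show p - 1 + 2 = p + 1 from by omega] at h0
    rcases eq_or_lt_of_le hp1 with h1 | h1
    · rw [if_pos (Or.inl (by omega))] at h0
      rw [if_pos (by omega), if_neg (by omega)] at h0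
      rw [← h1] at h0 ⊢
      rw [hl]
      push_cast at h0 ⊢
      linarith [h0]
    · rcases eq_or_lt_of_le hpN with h2 | h2
      · rw [if_pos (Or.inr (by omega))] at h0
        rw [if_neg (by omega), if_pos (by omega)] at h0
        rw [h2] at h0 ⊢
        rw [hr]
        linarith [h0]
      · rw [if_neg (by omega), if_pos (by omega), if_pos (by omega)] at h0
        linarith [h0]
  have hrec' : ∀ p : ℕ, p + 1 ≤ N → u p + u (p+2) = (2 + α * (p:ℝ) - l2) * u (p+1) := by
    intro p hp
    have h := hrec (p+1) (by omega) hp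
    rw [show p+1-1 = p from by omega] at h
    push_cast at h
    linear_combination h
  have hm2 : 2*m ≤ N + 1 := by
    have hx : (m:ℝ) ≤ ((N:ℝ)+1)/2 := le_trans hx1 hxhalf
    have h2 : ((2*m : ℕ) : ℝ) ≤ ((N + 1 : ℕ) : ℝ) := by push_cast; linarith
    exact_mod_cast h2
  have hmN' : m + 1 ≤ N := by omega
  have hu0 : 0 < u 0 := hl ▸ hu1
  have hpos : ∀ j, j < m → 0 < u j := by
    have key : ∀ j, 1 ≤ j → j < m → 0 < u j := by
      intro j hj1
      induction j, hj1 using Nat.le_induction with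
      | base => intro _; exact hu1
      | succ n hn ih =>
        intro hlt
        have hun : 0 < u n := ih (by omega)
        have h1 : ¬(u n = 0 ∨ u n * u (n+1) < 0) := fun hc => by
          have := huniq n (by omega) (by omega) hc; omega
        push_neg at h1
        have h2 : 0 ≤ u (n+1) := by nlinarith [h1.2]
        rcases h2.lt_or_eq with h3 | h3
        · exact h3
        · exfalso
          have := huniq (n+1) (by omega) (by omega) (Or.inl h3.symm)
          omega
    intro j hj
    rcases Nat.eq_zero_or_pos j with rfl | hj1
    · exact hu0
    · exact key j hj1 hj
  have hum : 0 ≤ u m := by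
    rcases eq_or_lt_of_le hm1 with h1 | h1
    · rw [← h1]; exact hu1.le
    · have hp : 0 < u (m-1) := hpos (m-1) (by omega)
      have h2 : ¬(u (m-1) = 0 ∨ u (m-1) * u (m-1+1) < 0) := fun hc => by
        have := huniq (m-1) (by omega) (by omega) hc; omega
      push_neg at h2
      rw [show m-1+1 = m from by omega] at h2
      nlinarith [h2.2]
  have hum1 : u (m+1) < 0 := by
    rcases hgz with h1 | h1
    · have hm2' : 2 ≤ m := by
        rcases eq_or_lt_of_le hm1 with hh | hh
        · exfalso; rw [← hh] at h1; exact hu1.ne' h1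
        · omega
      have hr1 := hrec m hm1 hmN
      rw [h1, mul_zero] at hr1
      have hp : 0 < u (m-1) := hpos (m-1) (by omega)
      linarith
    · nlinarith [hum]
  have hneg : ∀ j, m+1 ≤ j → j ≤ N → u j < 0 := by
    intro j hj1
    induction j, hj1 using Nat.le_induction with
    | base => intro _; exact hum1
    | succ n hn ih =>
      intro hle
      have hun : u n < 0 := ih (by omega)
      have h1 : ¬(u n = 0 ∨ u n * u (n+1) < 0) := fun hc => by
        have := huniq n (by omega) (by omega) hc; omega
      push_neg at h1
      have h2 : u (n+1) ≤ 0 := by nlinarith [h1.2]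
      rcases h2.lt_or_eq with h3 | h3
      · exact h3
      · exfalso
        have := huniq (n+1) (by omega) hle (Or.inl h3)
        omega
  have cvx : ∀ e a b : ℝ, 0 ≤ e → e ≤ 1 → 0 < a → 0 < b → 0 < e*a + (1-e)*b := by
    intro e a b h0 h1 ha hb
    rcases le_total a b with hab | hab
    · nlinarith
    · nlinarith
  constructor
  · -- Part (a)
    rintro ⟨hxa, hxb⟩ ε hε0 hε1 heq k hk
    have hε1' : (0:ℝ) ≤ 1 - ε := by linarith
    rcases Nat.eq_zero_or_pos k with rfl | hk1
    · simp only [Nat.add_zero, Nat.sub_zero]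
      have hb0 : 0 < ε * u m + (1-ε) * u (m-1) := by
        rcases hum.lt_or_eq with h1 | h1
        · exact cvx ε _ _ hε0 hε1 h1 (hpos (m-1) (by omega))
        · have hεlt : ε < 1 := by
            rcases hε1.lt_or_eq with hh | hh
            · exact hh
            · exfalso
              rw [← hh] at heq
              have hmz : u m = 0 := h1.symm
              rw [hmz] at heq
              nlinarith [hum1, heq]
          have h2 : 0 < (1-ε) * u (m-1) := mul_pos (by linarith) (hpos (m-1) (by omega))
          have h3 : ε * u m = 0 := by rw [← h1]; ring
          linarith
      rw [div_le_iff₀ hb0]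
      linarith [heq]
    · -- k ≥ 1, hence m ≥ 2
      have hm2' : 2 ≤ m := by omega
      have main : ∀ j, 1 ≤ j → j ≤ m - 1 →
          (ε*u (m+j+1) + (1-ε)*u (m+j)) + (ε*u (m-j) + (1-ε)*u (m-1-j)) ≤ 0 ∧
          ((ε*u (m+j+1) + (1-ε)*u (m+j)) + (ε*u (m-j) + (1-ε)*u (m-1-j))) * u (m-j+1)
            - ((ε*u (m+j) + (1-ε)*u (m+j-1)) + (ε*u (m-j+1) + (1-ε)*u (m-j))) * u (m-j) ≤ 0 := by
        intro j hj1
        induction j, hj1 using Nat.le_induction with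
        | base =>
          intro hb1
          obtain ⟨q, hq⟩ : ∃ q, m = q + 2 := ⟨m - 2, by omega⟩
          subst hq
          simp only [show q+2+1+1 = q+4 from by omega, show q+2+1 = q+3 from by omega,
            show q+2-1 = q+1 from by omega, show q+2-1-1 = q from by omega,
            show q+2-1+1 = q+2 from by omega, show q+2+1-1 = q+2 from by omega,
            show q+1-1 = q from by omega, show q+1+1 = q+2 from by omega,
            show q+3+1 = q+4 from by omega, show q+3-1 = q+2 from by omega] at heq ⊢
          have h1 := hrec' (q+2) (by omega)
          have h2 := hrec' (q+1) (by omega)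
          have h3 := hrec' q (by omega)
          rw [show q+2+2 = q+4 from by omega, show q+2+1 = q+3 from by omega] at h1
          rw [show q+1+2 = q+3 from by omega, show q+1+1 = q+2 from by omega] at h2
          push_cast at h1 h2 h3
          have hS1 : (ε*u (q+4) + (1-ε)*u (q+3)) + (ε*u (q+1) + (1-ε)*u q)
              = α*ε*u (q+3) - α*(1-ε)*u (q+1) := by
            linear_combination ε*h1 + h2 + (1-ε)*h3 + (1+α*((q:ℝ)+1)-l2)*heq
          have t1 : α*ε*u (q+3) ≤ 0 :=
            mul_nonpos_of_nonneg_of_nonpos (mul_nonneg hα hε0) (hneg (q+3) (by omega) (by omega)).le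
          have t2 : 0 ≤ α*(1-ε)*u (q+1) :=
            mul_nonneg (mul_nonneg hα hε1') (hpos (q+1) (by omega)).le
          have hS1le : (ε*u (q+4) + (1-ε)*u (q+3)) + (ε*u (q+1) + (1-ε)*u q) ≤ 0 := by
            linarith
          refine ⟨hS1le, ?_⟩
          have hS0 : (ε*u (q+3) + (1-ε)*u (q+2)) + (ε*u (q+2) + (1-ε)*u (q+1)) = 0 := by
            linarith [heq]
          have w := mul_nonpos_of_nonpos_of_nonneg hS1le hum
          have e2 : ((ε*u (q+3) + (1-ε)*u (q+2)) + (ε*u (q+2) + (1-ε)*u (q+1))) * u (q+1) = 0 := by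
            rw [hS0]; ring
          nlinarith [w, e2, hum]
        | succ n hn ih =>
          intro hb1
          obtain ⟨ih1, ih2⟩ := ih (by omega)
          obtain ⟨q, hq⟩ : ∃ q, m = n + 2 + q := ⟨m - n - 2, by omega⟩
          subst hq
          simp only [show n+2+q+(n+1)+1 = q+2*n+4 from by omega,
            show n+2+q+(n+1) = q+2*n+3 from by omega,
            show n+2+q-(n+1) = q+1 from by omega,
            show n+2+q-1-(n+1) = q from by omega,
            show n+2+q-(n+1)+1 = q+2 from by omega,
            show n+2+q+(n+1)-1 = q+2*n+2 from by omega,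
            show q+2*n+3+1 = q+2*n+4 from by omega, show q+1+1 = q+2 from by omega,
            show q+2*n+3-1 = q+2*n+2 from by omega]
          simp only [show n+2+q+n+1 = q+2*n+3 from by omega,
            show n+2+q+n = q+2*n+2 from by omega,
            show n+2+q-n = q+2 from by omega,
            show n+2+q-1-n = q+1 from by omega,
            show n+2+q-n+1 = q+3 from by omega,
            show n+2+q+n-1 = q+2*n+1 from by omega,
            show q+2*n+2+1 = q+2*n+3 from by omega, show q+2+1 = q+3 from by omega,
            show q+2*n+2-1 = q+2*n+1 from by omega] at ih1 ih2
          have h1 := hrec' (q+2*n+2) (by omega)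
          have h2 := hrec' (q+2*n+1) (by omega)
          have h3 := hrec' (q+1) (by omega)
          have h4 := hrec' q (by omega)
          rw [show q+2*n+2+2 = q+2*n+4 from by omega, show q+2*n+2+1 = q+2*n+3 from by omega] at h1
          rw [show q+2*n+1+2 = q+2*n+3 from by omega, show q+2*n+1+1 = q+2*n+2 from by omega] at h2
          rw [show q+1+2 = q+3 from by omega, show q+1+1 = q+2 from by omega] at h3
          push_cast at h1 h2 h3 h4
          have hB := hneg (q+2*n+3) (by omega) (by omega)
          have hC := hneg (q+2*n+2) (by omega) (by omega)
          have hD := hpos (q+1) (by omega)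
          have hE := hpos (q+2) (by omega)
          have hid : ((ε*u (q+2*n+4) + (1-ε)*u (q+2*n+3)) + (ε*u (q+1) + (1-ε)*u q)) * u (q+2)
              - ((ε*u (q+2*n+3) + (1-ε)*u (q+2*n+2)) + (ε*u (q+2) + (1-ε)*u (q+1))) * u (q+1)
              = (((ε*u (q+2*n+3) + (1-ε)*u (q+2*n+2)) + (ε*u (q+2) + (1-ε)*u (q+1))) * u (q+3)
                - ((ε*u (q+2*n+2) + (1-ε)*u (q+2*n+1)) + (ε*u (q+3) + (1-ε)*u (q+2))) * u (q+2))
                + α * u (q+2) * ((2*(n:ℝ)+1)*ε*u (q+2*n+3) + 2*(n:ℝ)*(1-ε)*u (q+2*n+2) - (1-ε)*u (q+1)) := by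
            linear_combination (ε*u (q+2))*h1 + ((1-ε)*u (q+2))*h2
              + (ε*u (q+2) - ((ε*u (q+2*n+3) + (1-ε)*u (q+2*n+2)) + (ε*u (q+2) + (1-ε)*u (q+1))))*h3
              + ((1-ε)*u (q+2))*h4
          have hbr : (2*(n:ℝ)+1)*ε*u (q+2*n+3) + 2*(n:ℝ)*(1-ε)*u (q+2*n+2) - (1-ε)*u (q+1) ≤ 0 := by
            have t1 : 0 ≤ (2*(n:ℝ)+1)*ε := by positivity
            have t2 : 0 ≤ 2*(n:ℝ)*(1-ε) := mul_nonneg (by positivity) hε1'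
            have t3 := mul_nonpos_of_nonneg_of_nonpos t1 hB.le
            have t4 := mul_nonpos_of_nonneg_of_nonpos t2 hC.le
            have t5 := mul_nonneg hε1' hD.le
            linarith
          have t6 : α * u (q+2) * ((2*(n:ℝ)+1)*ε*u (q+2*n+3) + 2*(n:ℝ)*(1-ε)*u (q+2*n+2) - (1-ε)*u (q+1)) ≤ 0 :=
            mul_nonpos_of_nonneg_of_nonpos (mul_nonneg hα hE.le) hbr
          have hWrN : ((ε*u (q+2*n+4) + (1-ε)*u (q+2*n+3)) + (ε*u (q+1) + (1-ε)*u q)) * u (q+2)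
              - ((ε*u (q+2*n+3) + (1-ε)*u (q+2*n+2)) + (ε*u (q+2) + (1-ε)*u (q+1))) * u (q+1) ≤ 0 := by
            linarith [hid, ih2, t6]
          have t4 : ((ε*u (q+2*n+3) + (1-ε)*u (q+2*n+2)) + (ε*u (q+2) + (1-ε)*u (q+1))) * u (q+1) ≤ 0 :=
            mul_nonpos_of_nonpos_of_nonneg ih1 hD.le
          have t5 : ((ε*u (q+2*n+4) + (1-ε)*u (q+2*n+3)) + (ε*u (q+1) + (1-ε)*u q)) * u (q+2) ≤ 0 := by
            linarith
          constructor
          · by_contra hcon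
            push_neg at hcon
            nlinarith [mul_pos hcon hE]
          · exact hWrN
      obtain ⟨hSk, _⟩ := main k hk1 hk
      have hbk : 0 < ε*u (m-k) + (1-ε)*u (m-1-k) :=
        cvx ε _ _ hε0 hε1 (hpos (m-k) (by omega)) (hpos (m-1-k) (by omega))
      rw [div_le_iff₀ hbk]
      linarith
  · -- Part (b)
    rintro ⟨hxa, hxb⟩ ε hε0 hε1 heq0 k hk1 hk
    have hε1' : (0:ℝ) ≤ 1 - ε := by linarith
    have h2mN : 2*m < N := by
      have hx : (m:ℝ) + 1/2 < ((N:ℝ)+1)/2 := lt_of_lt_of_le hxa hxhalf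
      have h2 : ((2*m+1 : ℕ) : ℝ) < ((N + 1 : ℕ) : ℝ) := by push_cast; linarith
      have := Nat.cast_lt.mp h2
      omega
    have hεlt : ε < 1 := by
      rcases hε1.lt_or_eq with hh | hh
      · exact hh
      · exfalso
        rw [← hh] at heq0
        nlinarith [hum1, heq0, hum]
    have main : ∀ j, 1 ≤ j → j ≤ m →
        (ε*u (m+j+1) + (1-ε)*u (m+j)) + (ε*u (m-j+1) + (1-ε)*u (m-j)) ≤ 0 ∧
        ((ε*u (m+j+1) + (1-ε)*u (m+j)) + (ε*u (m-j+1) + (1-ε)*u (m-j))) * u (m-j+1)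
          - ((ε*u (m+j) + (1-ε)*u (m+j-1)) + (ε*u (m-j+2) + (1-ε)*u (m-j+1))) * u (m-j) ≤ 0 := by
      intro j hj1
      induction j, hj1 using Nat.le_induction with
      | base =>
        intro hb1
        obtain ⟨q, hq⟩ : ∃ q, m = q + 1 := ⟨m - 1, by omega⟩
        subst hq
        simp only [show q+1+1+1 = q+3 from by omega, show q+1+1 = q+2 from by omega,
          show q+1-1 = q from by omega, show q+1-1+1 = q+1 from by omega,
          show q+1-1+2 = q+2 from by omega, show q+1+1-1 = q+1 from by omega,
          show q+2+1 = q+3 from by omega, show q+2-1 = q+1 from by omega,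
          show q+1-1 = q from by omega] at heq0 ⊢
        have h1 := hrec' (q+1) (by omega)
        have h2 := hrec' q (by omega)
        rw [show q+1+2 = q+3 from by omega, show q+1+1 = q+2 from by omega] at h1
        push_cast at h1 h2
        have hS1 : (ε*u (q+3) + (1-ε)*u (q+2)) + (ε*u (q+1) + (1-ε)*u q) = α*ε*u (q+2) := by
          linear_combination ε*h1 + (1-ε)*h2 + (2+α*(q:ℝ)-l2)*heq0
        have t1 : α*ε*u (q+2) ≤ 0 :=
          mul_nonpos_of_nonneg_of_nonpos (mul_nonneg hα hε0) (hneg (q+2) (by omega) (by omega)).le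
        have hS1le : (ε*u (q+3) + (1-ε)*u (q+2)) + (ε*u (q+1) + (1-ε)*u q) ≤ 0 := by linarith
        refine ⟨hS1le, ?_⟩
        have hS0 : (ε*u (q+2) + (1-ε)*u (q+1)) + (ε*u (q+2) + (1-ε)*u (q+1)) = 0 := by
          linarith [heq0]
        have w := mul_nonpos_of_nonpos_of_nonneg hS1le hum
        have e2 : ((ε*u (q+2) + (1-ε)*u (q+1)) + (ε*u (q+2) + (1-ε)*u (q+1))) * u q = 0 := by
          rw [hS0]; ring
        nlinarith [w, e2]
      | succ n hn ih =>
        intro hb1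
        obtain ⟨ih1, ih2⟩ := ih (by omega)
        obtain ⟨q, hq⟩ : ∃ q, m = n + 1 + q := ⟨m - n - 1, by omega⟩
        subst hq
        simp only [show n+1+q+(n+1)+1 = q+2*n+3 from by omega,
          show n+1+q+(n+1) = q+2*n+2 from by omega,
          show n+1+q-(n+1)+1 = q+1 from by omega,
          show n+1+q-(n+1) = q from by omega,
          show n+1+q+(n+1)-1 = q+2*n+1 from by omega,
          show n+1+q-(n+1)+2 = q+2 from by omega,
          show q+2*n+2+1 = q+2*n+3 from by omega, show q+2*n+2-1 = q+2*n+1 from by omega]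
        simp only [show n+1+q+n+1 = q+2*n+2 from by omega,
          show n+1+q+n = q+2*n+1 from by omega,
          show n+1+q-n+1 = q+2 from by omega,
          show n+1+q-n = q+1 from by omega,
          show n+1+q+n-1 = q+2*n from by omega,
          show n+1+q-n+2 = q+3 from by omega,
          show q+2*n+1+1 = q+2*n+2 from by omega, show q+1+1 = q+2 from by omega,
          show q+1+2 = q+3 from by omega, show q+2*n+1-1 = q+2*n from by omega] at ih1 ih2
        have h1 := hrec' (q+2*n+1) (by omega)
        have h2 := hrec' (q+2*n) (by omega)
        have h3 := hrec' (q+1) (by omega)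
        have h4 := hrec' q (by omega)
        rw [show q+2*n+1+2 = q+2*n+3 from by omega, show q+2*n+1+1 = q+2*n+2 from by omega] at h1
        rw [show q+2*n+2 = q+2*n+2 from rfl] at h2
        rw [show q+2*n+0+2 = q+2*n+2 from by omega] at h2
        rw [show q+2*n+1 = q+2*n+1 from rfl] at h2
        rw [show q+1+2 = q+3 from by omega, show q+1+1 = q+2 from by omega] at h3
        push_cast at h1 h2 h3 h4
        have hB := hneg (q+2*n+2) (by omega) (by omega)
        have hC := hneg (q+2*n+1) (by omega) (by omega)
        have hD := hpos (q+1) (by omega)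
        have hD0 := hpos q (by omega)
        have hid : ((ε*u (q+2*n+3) + (1-ε)*u (q+2*n+2)) + (ε*u (q+1) + (1-ε)*u q)) * u (q+1)
            - ((ε*u (q+2*n+2) + (1-ε)*u (q+2*n+1)) + (ε*u (q+2) + (1-ε)*u (q+1))) * u q
            = (((ε*u (q+2*n+2) + (1-ε)*u (q+2*n+1)) + (ε*u (q+2) + (1-ε)*u (q+1))) * u (q+2)
              - ((ε*u (q+2*n+1) + (1-ε)*u (q+2*n)) + (ε*u (q+3) + (1-ε)*u (q+2))) * u (q+1))
              + α * u (q+1) * ((2*(n:ℝ)+1)*ε*u (q+2*n+2) + 2*(n:ℝ)*(1-ε)*u (q+2*n+1) + ε*u (q+2)) := by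
          linear_combination (ε*u (q+1))*h1 + ((1-ε)*u (q+1))*h2 + (ε*u (q+1))*h3
            + ((1-ε)*u (q+1) - ((ε*u (q+2*n+2) + (1-ε)*u (q+2*n+1)) + (ε*u (q+2) + (1-ε)*u (q+1))))*h4
        have hbr : (2*(n:ℝ)+1)*ε*u (q+2*n+2) + 2*(n:ℝ)*(1-ε)*u (q+2*n+1) + ε*u (q+2) ≤ 0 := by
          have hcast : (1:ℝ) ≤ (n:ℝ) := by exact_mod_cast hn
          have t1 : 0 ≤ 2*(n:ℝ)*ε := by positivity
          have t2 : 0 ≤ (2*(n:ℝ)-1)*(1-ε) := mul_nonneg (by linarith) hε1'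
          have t3 := mul_nonpos_of_nonneg_of_nonpos t1 hB.le
          have t4 := mul_nonpos_of_nonneg_of_nonpos t2 hC.le
          have t5 := mul_nonneg hε1' hD.le
          -- bracket = [2nε*a2 + (2n-1)(1-ε)*a1 - (1-ε)*d1] + S'n
          linarith [ih1]
        have t6 : α * u (q+1) * ((2*(n:ℝ)+1)*ε*u (q+2*n+2) + 2*(n:ℝ)*(1-ε)*u (q+2*n+1) + ε*u (q+2)) ≤ 0 :=
          mul_nonpos_of_nonneg_of_nonpos (mul_nonneg hα hD.le) hbr
        have hWrN : ((ε*u (q+2*n+3) + (1-ε)*u (q+2*n+2)) + (ε*u (q+1) + (1-ε)*u q)) * u (q+1)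
            - ((ε*u (q+2*n+2) + (1-ε)*u (q+2*n+1)) + (ε*u (q+2) + (1-ε)*u (q+1))) * u q ≤ 0 := by
          linarith [hid, ih2, t6]
        have t4 : ((ε*u (q+2*n+2) + (1-ε)*u (q+2*n+1)) + (ε*u (q+2) + (1-ε)*u (q+1))) * u q ≤ 0 :=
          mul_nonpos_of_nonpos_of_nonneg ih1 hD0.le
        have t5 : ((ε*u (q+2*n+3) + (1-ε)*u (q+2*n+2)) + (ε*u (q+1) + (1-ε)*u q)) * u (q+1) ≤ 0 := by
          linarith
        constructor
        · by_contra hcon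
          push_neg at hcon
          nlinarith [mul_pos hcon hD]
        · exact hWrN
    obtain ⟨hSk, _⟩ := main k hk1 hk
    have ha : 0 ≤ u (m-k+1) := by
      rcases Nat.lt_or_ge (m-k+1) m with hh | hh
      · exact (hpos _ hh).le
      · rw [show m-k+1 = m from by omega]
        exact hum
    have hbpos : 0 < u (m-k) := hpos _ (by omega)
    have hbk : 0 < ε*u (m-k+1) + (1-ε)*u (m-k) := by
      have w1 : 0 ≤ ε * u (m-k+1) := mul_nonneg hε0 ha
      have w2 : 0 < (1-ε) * u (m-k) := mul_pos (by linarith) hbpos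
      linarith
    rw [div_le_iff₀ hbk]
    linarith
end

section
/- Let N ≥ 1, let A, B : {1,…,N} → ℝ, let λ, μ ∈ ℝ, and let (u_i)_{i=0}^{N+1} and (v_i)_{i=0}^{N+1} be real sequences satisfying (2 + B_i − λ)u_i = u_{i−1} + u_{i+1} and (2 + A_i − μ)v_i = v_{i−1} + v_{i+1} for all 1 ≤ i ≤ N. Let 1 ≤ m ≤ n ≤ N and set Θ_i = A_i − B_i − (μ − λ); assume Θ_i ≤ 0 for all i ∈ {m,…,n} and Θ_i < 0 for at least one i ∈ {m,…,n}. Assume u_i > 0 for all i ∈ {m,…,n}, and that η ∈ [m−1, m) and ξ ∈ (n, n+1] satisfy (m−η)u_{m−1} + (η−m+1)u_m = 0 and (n+1−ξ)u_n + (ξ−n)u_{n+1} = 0 (i.e., η and ξ are adjacent nodes of the u-line). Then the v-line has a node at some point x with η ≤ x ≤ ξ. -/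
private lemma seg_sign (v : ℕ → ℝ) (k : ℕ) (a b : ℝ) (hab : a ≤ b)
    (h : ∀ x : ℝ, a ≤ x → x ≤ b →
      ((k : ℝ) + 1 - x) * v k + (x - (k : ℝ)) * v (k + 1) ≠ 0) :
    0 < (((k : ℝ) + 1 - a) * v k + (a - (k : ℝ)) * v (k + 1)) *
        (((k : ℝ) + 1 - b) * v k + (b - (k : ℝ)) * v (k + 1)) := by
  set f : ℝ → ℝ := fun x => ((k : ℝ) + 1 - x) * v k + (x - (k : ℝ)) * v (k + 1) with hf
  have hc : ContinuousOn f (Set.Icc a b) := by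
    apply Continuous.continuousOn
    fun_prop
  have ha := h a le_rfl hab
  have hb := h b hab le_rfl
  rcases lt_trichotomy (f a * f b) 0 with hlt | heq | hgt
  · exfalso
    rcases mul_neg_iff.mp hlt with ⟨h1, h2⟩ | ⟨h1, h2⟩
    · obtain ⟨x, hx, hfx⟩ := intermediate_value_Icc' hab hc ⟨h2.le, h1.le⟩
      exact h x hx.1 hx.2 hfx
    · obtain ⟨x, hx, hfx⟩ := intermediate_value_Icc hab hc ⟨h1.le, h2.le⟩
      exact h x hx.1 hx.2 hfx
  · exact absurd (mul_eq_zero.mp heq) (by push_neg; exact ⟨ha, hb⟩)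
  · exact hgt

private lemma sign_trans {a b c : ℝ} (h1 : 0 < a * b) (h2 : 0 < b * c) : 0 < a * c := by
  have hb : b ≠ 0 := by rintro rfl; simp at h1
  have hb2 : 0 < b ^ 2 := by positivity
  nlinarith [mul_pos h1 h2]

set_option maxHeartbeats 1000000 in
/-- Gantmakher–Kreĭn separation: let `u, v` satisfy the recurrences
`(2 + B_i - λ)u_i = u_{i-1} + u_{i+1}` and `(2 + A_i - μ)v_i = v_{i-1} + v_{i+1}` for
`1 ≤ i ≤ N`, let `Θ_i = A_i - B_i - (μ - λ) ≤ 0` on `{m,…,n}` with strict inequality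
somewhere, let `u` be positive on `{m,…,n}`, and let `η ∈ [m-1, m)`, `ξ ∈ (n, n+1]` be
adjacent nodes of the `u`-line.  Then the `v`-line has a node in `[η, ξ]`. -/
theorem gantmakher_node_separation (N : ℕ) (hN : 1 ≤ N)
    (A B : ℕ → ℝ) (lam mu : ℝ) (u v : ℕ → ℝ)
    (hu : ∀ i : ℕ, 1 ≤ i → i ≤ N → (2 + B i - lam) * u i = u (i - 1) + u (i + 1))
    (hv : ∀ i : ℕ, 1 ≤ i → i ≤ N → (2 + A i - mu) * v i = v (i - 1) + v (i + 1))
    (m n : ℕ) (hm : 1 ≤ m) (hmn : m ≤ n) (hn : n ≤ N)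
    (hΘ : ∀ i : ℕ, m ≤ i → i ≤ n → A i - B i - (mu - lam) ≤ 0)
    (hΘ' : ∃ i : ℕ, m ≤ i ∧ i ≤ n ∧ A i - B i - (mu - lam) < 0)
    (hupos : ∀ i : ℕ, m ≤ i → i ≤ n → 0 < u i)
    (η ξ : ℝ)
    (hη1 : (m : ℝ) - 1 ≤ η) (hη2 : η < (m : ℝ))
    (hηnode : ((m : ℝ) - η) * u (m - 1) + (η - (m : ℝ) + 1) * u m = 0)
    (hξ1 : (n : ℝ) < ξ) (hξ2 : ξ ≤ (n : ℝ) + 1)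
    (hξnode : ((n : ℝ) + 1 - ξ) * u n + (ξ - (n : ℝ)) * u (n + 1) = 0) :
    ∃ x : ℝ, η ≤ x ∧ x ≤ ξ ∧
      ∃ k : ℕ, k ≤ N ∧ (k : ℝ) ≤ x ∧ x ≤ (k : ℝ) + 1 ∧
        ((k : ℝ) + 1 - x) * v k + (x - (k : ℝ)) * v (k + 1) = 0 := by
  by_contra H
  push_neg at H
  -- H : ∀ x, η ≤ x → x ≤ ξ → ∀ k, k ≤ N → ↑k ≤ x → x ≤ ↑k + 1 → (...) ≠ 0
  obtain ⟨m', rfl⟩ : ∃ m', m = m' + 1 := ⟨m - 1, (Nat.succ_pred_eq_of_pos hm).symm⟩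
  simp only [Nat.add_sub_cancel] at hηnode
  push_cast at hη1 hη2 hηnode
  -- basic real inequalities
  have hmn' : ((m' : ℝ) + 1) ≤ (n : ℝ) := by exact_mod_cast hmn
  have hm1ξ : ((m' : ℝ) + 1) ≤ ξ := by linarith
  have hηn : η ≤ (n : ℝ) := by linarith
  -- left segment sign
  have Q0 : 0 < (((m' : ℝ) + 1 - η) * v m' + (η - (m' : ℝ)) * v (m' + 1)) * v (m' + 1) := by
    have h := seg_sign v m' η ((m' : ℝ) + 1) (by linarith)
      (fun x hx1 hx2 => H x hx1 (by linarith) m' (by omega) (by linarith) hx2)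
    have e2 : ((m' : ℝ) + 1 - ((m' : ℝ) + 1)) * v m' + (((m' : ℝ) + 1) - (m' : ℝ)) * v (m' + 1)
        = v (m' + 1) := by ring
    rwa [e2] at h
  -- middle segments sign
  have Qmid : ∀ i : ℕ, m' + 1 ≤ i → i + 1 ≤ n → 0 < v i * v (i + 1) := by
    intro i hi hin
    have hci : ((m' : ℝ) + 1) ≤ (i : ℝ) := by exact_mod_cast hi
    have hci' : ((i : ℝ) + 1) ≤ (n : ℝ) := by exact_mod_cast hin
    have h := seg_sign v i (i : ℝ) ((i : ℝ) + 1) (by linarith)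
      (fun x hx1 hx2 => H x (by linarith) (by linarith) i (by omega) hx1 hx2)
    have e1 : ((i : ℝ) + 1 - (i : ℝ)) * v i + ((i : ℝ) - (i : ℝ)) * v (i + 1) = v i := by ring
    have e2 : ((i : ℝ) + 1 - ((i : ℝ) + 1)) * v i + (((i : ℝ) + 1) - (i : ℝ)) * v (i + 1)
        = v (i + 1) := by ring
    rwa [e1, e2] at h
  -- right segment sign
  have Qn : 0 < v n * (((n : ℝ) + 1 - ξ) * v n + (ξ - (n : ℝ)) * v (n + 1)) := by
    have h := seg_sign v n (n : ℝ) ξ (by linarith)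
      (fun x hx1 hx2 => H x (by linarith) hx2 n hn hx1 (by linarith))
    have e1 : ((n : ℝ) + 1 - (n : ℝ)) * v n + ((n : ℝ) - (n : ℝ)) * v (n + 1) = v n := by ring
    rwa [e1] at h
  -- v has constant sign relative to v (m'+1) on [m'+1, n]
  have hvm : ∀ i : ℕ, m' + 1 ≤ i → i ≤ n → 0 < v i * v (m' + 1) := by
    intro i hi
    induction i, hi using Nat.le_induction with
    | base =>
      intro _
      have hv0 : v (m' + 1) ≠ 0 := by
        intro h0
        rw [h0, mul_zero] at Q0
        exact lt_irrefl 0 Q0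
      exact mul_self_pos.mpr hv0
    | succ i hi ih =>
      intro hin
      have h1 : 0 < v i * v (m' + 1) := ih (by omega)
      have h2 : 0 < v (i + 1) * v i := by
        rw [mul_comm]; exact Qmid i hi hin
      exact sign_trans h2 h1
  -- the weighted Wronskian
  set W : ℕ → ℝ := fun i => (u i * v (i + 1) - u (i + 1) * v i) * v (m' + 1) with hWdef
  have hstep : ∀ j : ℕ, m' ≤ j → j + 1 ≤ n →
      W (j + 1) = W j + u (j + 1) * (v (j + 1) * v (m' + 1)) *
        (A (j + 1) - B (j + 1) - (mu - lam)) := by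
    intro j hj hjn
    have hu' := hu (j + 1) (by omega) (by omega)
    have hv' := hv (j + 1) (by omega) (by omega)
    simp only [Nat.add_sub_cancel] at hu' hv'
    simp only [hWdef]
    linear_combination (v (j + 1) * v (m' + 1)) * hu' - (u (j + 1) * v (m' + 1)) * hv'
  -- W is nonincreasing on [m', n]
  have hmono : ∀ a : ℕ, m' ≤ a → ∀ b : ℕ, a ≤ b → b ≤ n → W b ≤ W a := by
    intro a ha b hb
    induction b, hb using Nat.le_induction with
    | base => intro _; exact le_rfl
    | succ b hab ih =>
      intro hbn
      have h1 := ih (by omega)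
      have hstepb := hstep b (by omega) hbn
      have hpos : 0 < u (b + 1) := hupos (b + 1) (by omega) hbn
      have hvv : 0 < v (b + 1) * v (m' + 1) := hvm (b + 1) (by omega) hbn
      have hΘb := hΘ (b + 1) (by omega) hbn
      nlinarith [mul_pos hpos hvv]
  -- strict decrease somewhere
  obtain ⟨i₀, hi₀m, hi₀n, hΘs⟩ := hΘ'
  obtain ⟨j₀, rfl⟩ : ∃ j, i₀ = j + 1 := ⟨i₀ - 1, by omega⟩
  have hlt : W (j₀ + 1) < W j₀ := by
    have hstepb := hstep j₀ (by omega) hi₀n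
    have hpos : 0 < u (j₀ + 1) := hupos (j₀ + 1) hi₀m hi₀n
    have hvv : 0 < v (j₀ + 1) * v (m' + 1) := hvm (j₀ + 1) hi₀m hi₀n
    nlinarith [mul_pos hpos hvv]
  have hWn_le : W n ≤ W (j₀ + 1) := hmono (j₀ + 1) (by omega) n hi₀n le_rfl
  have hWj₀ : W j₀ ≤ W m' := hmono m' le_rfl j₀ (by omega) (by omega)
  -- left boundary: W m' < 0
  have hWm' : W m' < 0 := by
    have key : ((m' : ℝ) + 1 - η) * W m' =
        -(u (m' + 1)) * ((((m' : ℝ) + 1 - η) * v m' + (η - (m' : ℝ)) * v (m' + 1)) * v (m' + 1)) := by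
      simp only [hWdef]
      linear_combination (v (m' + 1) * v (m' + 1)) * hηnode
    have ht : 0 < (m' : ℝ) + 1 - η := by linarith
    have hup : 0 < u (m' + 1) := hupos (m' + 1) le_rfl hmn
    nlinarith [mul_pos hup Q0]
  -- right boundary: 0 < W n
  have hq1 : 0 < (((n : ℝ) + 1 - ξ) * v n + (ξ - (n : ℝ)) * v (n + 1)) * v (m' + 1) := by
    have h1 : 0 < (((n : ℝ) + 1 - ξ) * v n + (ξ - (n : ℝ)) * v (n + 1)) * v n := by
      rw [mul_comm]; exact Qn
    exact sign_trans h1 (hvm n hmn le_rfl)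
  have hWn : 0 < W n := by
    have key : (ξ - (n : ℝ)) * W n =
        u n * ((((n : ℝ) + 1 - ξ) * v n + (ξ - (n : ℝ)) * v (n + 1)) * v (m' + 1)) := by
      simp only [hWdef]
      linear_combination (-(v n * v (m' + 1))) * hξnode
    have hs : 0 < ξ - (n : ℝ) := by linarith
    have hun : 0 < u n := hupos n hmn le_rfl
    nlinarith [mul_pos hun hq1]
  linarith
end

section
/- Let N ≥ 2 and α ≥ 0, and let u(λ_2) be the unit eigenvector of H_{αU}(P_N) for its second smallest eigenvalue λ_2, chosen with u_1(λ_2) > 0 and extended by u_0(λ_2) = u_1(λ_2), u_{N+1}(λ_2) = u_N(λ_2). Let x be the first node of the u(λ_2)-line. Then there exists m ∈ {1,…,N} with m ≥ 2x − 1 (so the region {1,…,m} contains an interval symmetric about x) such that u_{i+1}(λ_2) ≤ u_i(λ_2) for all 1 ≤ i ≤ m−1. -/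
lemma fin_sum_if (N a : ℕ) (f : Fin N → ℝ) :
    (∑ k : Fin N, if (k : ℕ) = a then f k else 0) = if h : a < N then f ⟨a, h⟩ else 0 := by
  split_ifs with h
  · rw [Finset.sum_eq_single (⟨a, h⟩ : Fin N)]
    · simp
    · intro b _ hb
      have : (b : ℕ) ≠ a := fun hc => hb (Fin.ext hc)
      simp [this]
    · simp
  · apply Finset.sum_eq_zero
    intro k _
    have hk := k.2
    have : (k : ℕ) ≠ a := by omega
    simp [this]

lemma pathH_row (N : ℕ) (W : ℕ → ℝ) (v : Fin N → ℝ) (i : Fin N) :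
    (pathH N W).mulVec v i =
      ((if (i : ℕ) = 0 ∨ (i : ℕ) = N - 1 then (1 : ℝ) else 2) + W ((i : ℕ) + 1)) * v i
      + (if h : (i : ℕ) + 1 < N then -v ⟨(i : ℕ) + 1, h⟩ else 0)
      + (if h : 1 ≤ (i : ℕ) then
          -v ⟨(i : ℕ) - 1, lt_of_le_of_lt (Nat.sub_le _ _) i.2⟩ else 0) := by
  classical
  have hptw : ∀ k : Fin N, (pathH N W) i k * v k =
      (if (k : ℕ) = (i : ℕ) then
        ((if (i : ℕ) = 0 ∨ (i : ℕ) = N - 1 then (1 : ℝ) else 2) + W ((i : ℕ) + 1)) * v k else 0)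
      + (if (k : ℕ) = (i : ℕ) + 1 then -v k else 0)
      + (if (k : ℕ) + 1 = (i : ℕ) then -v k else 0) := by
    intro k
    simp only [pathH, Matrix.of_apply]
    by_cases h1 : (k : ℕ) = (i : ℕ)
    · have hik : i = k := Fin.ext h1.symm
      rw [if_pos hik, if_pos h1, if_neg (by omega : ¬ ((k:ℕ) = (i:ℕ)+1)),
        if_neg (by omega : ¬ ((k:ℕ)+1 = (i:ℕ)))]
      ring
    · have hik : ¬ (i = k) := fun hc => h1 (by rw [hc])
      rw [if_neg hik, if_neg h1]
      by_cases h2 : (k : ℕ) = (i : ℕ) + 1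
      · rw [if_pos (Or.inl h2.symm), if_pos h2, if_neg (by omega : ¬ ((k:ℕ)+1 = (i:ℕ)))]
        ring
      · by_cases h3 : (k : ℕ) + 1 = (i : ℕ)
        · rw [if_pos (Or.inr h3), if_neg h2, if_pos h3]
          ring
        · rw [if_neg (by omega : ¬ ((i:ℕ) + 1 = (k:ℕ) ∨ (k:ℕ) + 1 = (i:ℕ))), if_neg h2,
            if_neg h3]
          ring
  have h3sum : (∑ k : Fin N, if (k : ℕ) + 1 = (i : ℕ) then -v k else 0)
      = if h : 1 ≤ (i : ℕ) then
          -v ⟨(i : ℕ) - 1, lt_of_le_of_lt (Nat.sub_le _ _) i.2⟩ else 0 := by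
    by_cases hi : 1 ≤ (i : ℕ)
    · rw [dif_pos hi]
      have hcg : (∑ k : Fin N, if (k : ℕ) + 1 = (i : ℕ) then -v k else 0)
          = ∑ k : Fin N, if (k : ℕ) = (i : ℕ) - 1 then -v k else 0 :=
        Finset.sum_congr rfl (fun k _ => if_congr (by omega) rfl rfl)
      rw [hcg, fin_sum_if, dif_pos (lt_of_le_of_lt (Nat.sub_le _ _) i.2)]
    · rw [dif_neg hi]
      apply Finset.sum_eq_zero
      intro k _
      rw [if_neg (by omega)]
  unfold Matrix.mulVec dotProduct
  rw [Finset.sum_congr rfl (fun k _ => hptw k), Finset.sum_add_distrib,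
    Finset.sum_add_distrib, fin_sum_if, fin_sum_if, h3sum, dif_pos i.2]


lemma path_rec (N : ℕ) (hN : 2 ≤ N) (α l2 : ℝ) (u : ℕ → ℝ)
    (hue : (pathH N (fun i => α * ((i : ℝ) - 1))).mulVec
        (fun i : Fin N => u ((i : ℕ) + 1)) = l2 • fun i : Fin N => u ((i : ℕ) + 1))
    (hl : u 0 = u 1) (hr : u (N + 1) = u N) :
    ∀ j : ℕ, 1 ≤ j → j ≤ N →
      u j - u (j + 1) = (u (j - 1) - u j) + (l2 - α * ((j : ℝ) - 1)) * u j := by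
  intro j h1 hjN
  have hi : j - 1 < N := by omega
  have hv := congrFun hue ⟨j - 1, hi⟩
  rw [pathH_row] at hv
  simp only [Fin.val_mk, Pi.smul_apply, smul_eq_mul] at hv
  have e1 : j - 1 + 1 = j := by omega
  rw [e1] at hv
  by_cases hj1 : j = 1
  · subst hj1
    rw [dif_pos (by omega : 1 < N), dif_neg (by omega : ¬ 1 ≤ 1 - 1)] at hv
    rw [if_pos (by omega : 1 - 1 = 0 ∨ 1 - 1 = N - 1)] at hv
    push_cast at hv
    linear_combination hv - hl
  · by_cases hjN' : j = N
    · subst hjN'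
      rw [dif_neg (by omega : ¬ j < j), dif_pos (by omega : 1 ≤ j - 1),
        if_pos (Or.inr rfl : j - 1 = 0 ∨ j - 1 = j - 1),
        show j - 1 - 1 + 1 = j - 1 from by omega] at hv
      linear_combination hv - hr
    · rw [dif_pos (by omega : j < N), dif_pos (by omega : 1 ≤ j - 1),
        if_neg (by omega : ¬ (j - 1 = 0 ∨ j - 1 = N - 1)),
        show j - 1 - 1 + 1 = j - 1 from by omega] at hv
      linear_combination hv

set_option maxHeartbeats 2000000 in
lemma key (N : ℕ) (hN : 2 ≤ N) (c : ℕ → ℝ) (hc : ∀ j k : ℕ, j ≤ k → c k ≤ c j)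
    (u : ℕ → ℝ)
    (hd : ∀ j, 1 ≤ j → j ≤ N → u j - u (j + 1) = (u (j - 1) - u j) + c j * u j)
    (hu1 : 0 < u 1) (hl : u 0 = u 1) (hr : u (N + 1) = u N)
    (x : ℝ) (hx : IsNodeOf N u x) (hxfirst : ∀ y : ℝ, IsNodeOf N u y → x ≤ y) :
    ∃ m : ℕ, 1 ≤ m ∧ m ≤ N ∧ 2 * x - 1 ≤ (m : ℝ) ∧
      ∀ i : ℕ, 1 ≤ i → i + 1 ≤ m → u (i + 1) ≤ u i := by
  classical
  obtain ⟨k0, hk0N, hk0x, hxk0, hnode0⟩ := hx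
  -- positivity strictly before the first node
  have hpos : ∀ j : ℕ, (j : ℝ) < x → 0 < u j := by
    intro j
    induction j using Nat.strong_induction_on with
    | _ j ih =>
      intro hjx
      by_contra hju
      push_neg at hju
      have hj2 : 2 ≤ j := by
        rcases Nat.lt_or_ge j 2 with hj | hj
        · interval_cases j
          · rw [hl] at hju; linarith
          · linarith
        · exact hj
      have hprevx : ((j - 1 : ℕ) : ℝ) < x := by
        have h1 : ((j - 1 : ℕ) : ℝ) ≤ (j : ℝ) := by
          exact_mod_cast Nat.sub_le j 1
        linarith
      have hprev : 0 < u (j - 1) := ih (j - 1) (by omega) hprevx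
      have hjN : j ≤ N := by
        have h1 : (j : ℝ) < (k0 : ℝ) + 1 := lt_of_lt_of_le hjx hxk0
        have h2 : j < k0 + 1 := by exact_mod_cast h1
        omega
      set p := u (j - 1) with hp
      set q := u j with hq
      have hpq : 0 < p - q := by linarith
      set t := p / (p - q) with ht
      have ht0 : 0 < t := div_pos hprev hpq
      have ht1 : t ≤ 1 := by rw [div_le_one hpq]; linarith
      have hnode : IsNodeOf N u (((j - 1 : ℕ) : ℝ) + t) := by
        refine ⟨j - 1, by omega, by linarith, by linarith, ?_⟩
        rw [show (j - 1) + 1 = j from by omega]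
        have : t * (p - q) = p := div_mul_cancel₀ p (ne_of_gt hpq)
        linear_combination -this
      have hle := hxfirst _ hnode
      have : ((j - 1 : ℕ) : ℝ) + t ≤ (j : ℝ) := by
        have : ((j - 1 : ℕ) : ℝ) = (j : ℝ) - 1 := by
          have : (1:ℕ) ≤ j := by omega
          push_cast [Nat.cast_sub this]
          ring
        linarith
      linarith
  -- x > 1
  have hx1 : 1 < x := by
    by_contra hcon
    push_neg at hcon
    have hk01 : k0 ≤ 1 := by
      have : (k0 : ℝ) ≤ 1 := le_trans hk0x hcon
      exact_mod_cast this
    interval_cases k0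
    · have : u 1 = 0 := by push_cast at hnode0; linear_combination hnode0 - (1 - x) * hl
      linarith
    · have hxe : x = 1 := le_antisymm hcon (by exact_mod_cast hk0x)
      rw [hxe] at hnode0
      push_cast at hnode0
      have : u 1 = 0 := by linear_combination hnode0
      linarith
  -- extraction of the node cell K
  obtain ⟨K, hK1, hKN, hKx, hxK1, hKpos, hK1neg, hKnode⟩ :
      ∃ K : ℕ, 1 ≤ K ∧ K ≤ N ∧ (K : ℝ) < x ∧ x ≤ (K : ℝ) + 1 ∧ 0 < u K ∧ u (K + 1) ≤ 0 ∧
        ((K : ℝ) + 1 - x) * u K + (x - (K : ℝ)) * u (K + 1) = 0 := by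
    by_cases hcase : (k0 : ℝ) < x
    · have hk01 : 1 ≤ k0 := by
        by_contra hk
        have hk0 : k0 = 0 := by omega
        subst hk0
        push_cast at hxk0
        linarith
      have huk0 : 0 < u k0 := hpos k0 hcase
      have hneg : u (k0 + 1) ≤ 0 := by
        by_contra hpos'
        push_neg at hpos'
        nlinarith [mul_nonneg (by linarith : (0:ℝ) ≤ (k0:ℝ) + 1 - x) huk0.le,
          mul_pos (by linarith : (0:ℝ) < x - (k0:ℝ)) hpos']
      exact ⟨k0, hk01, hk0N, hcase, hxk0, huk0, hneg, hnode0⟩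
    · push_neg at hcase
      have hxe : x = (k0 : ℝ) := le_antisymm hcase hk0x
      have hu0 : u k0 = 0 := by
        rw [hxe] at hnode0
        linear_combination hnode0
      have hk02 : 2 ≤ k0 := by
        have h5 : (1:ℝ) < (k0:ℝ) := by rw [← hxe]; exact hx1
        have h6 : 1 < k0 := by exact_mod_cast h5
        omega
      have hcast : ((k0 - 1 : ℕ) : ℝ) = (k0 : ℝ) - 1 := by
        push_cast [Nat.cast_sub (by omega : 1 ≤ k0)]
        ring
      refine ⟨k0 - 1, by omega, by omega, ?_, ?_, ?_, ?_, ?_⟩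
      · rw [hcast, hxe]; linarith
      · rw [hcast, hxe]; linarith
      · exact hpos (k0 - 1) (by rw [hcast, hxe]; linarith)
      · rw [show k0 - 1 + 1 = k0 from by omega, hu0]
      · rw [show k0 - 1 + 1 = k0 from by omega, hcast, hxe, hu0]; ring
  have hKN' : K + 1 ≤ N := by
    rcases Nat.lt_or_ge K N with h | h
    · omega
    · exfalso
      have : K = N := le_antisymm hKN h
      subst this
      rw [hr] at hK1neg
      linarith
  -- c 1 > 0
  have hc1 : 0 < c 1 := by
    by_contra hcon
    push_neg at hcon
    have grow : ∀ j : ℕ, 1 ≤ j → j ≤ N → 0 < u j ∧ u j ≤ u (j + 1) := by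
      intro j
      induction j with
      | zero => intro h1 _; exact absurd h1 (by omega)
      | succ n ih =>
        intro h1 h2
        by_cases hn : n = 0
        · subst hn
          refine ⟨hu1, ?_⟩
          have hd1 := hd 1 le_rfl (by omega)
          have hmn : (0:ℝ) ≤ (-c 1) * u 1 := mul_nonneg (by linarith) hu1.le
          norm_num at hd1
          linarith [hd1, hl]
        · have hn1 : 1 ≤ n := by omega
          obtain ⟨hpos', hle'⟩ := ih hn1 (by omega)
          have hup : 0 < u (n + 1) := lt_of_lt_of_le hpos' hle'
          refine ⟨hup, ?_⟩
          have hdn := hd (n + 1) (by omega) h2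
          rw [show n + 1 - 1 = n from by omega] at hdn
          have hcn : c (n + 1) ≤ 0 := le_trans (hc 1 (n + 1) (by omega)) hcon
          have hmn : (0:ℝ) ≤ (-c (n + 1)) * u (n + 1) := mul_nonneg (by linarith) hup.le
          linarith [hdn]
    have := (grow (K + 1) (by omega) hKN').1
    linarith
  -- the minimal index m with u m ≤ u (m+1)
  have hQex : ∃ i, 1 ≤ i ∧ i ≤ N ∧ u i ≤ u (i + 1) := ⟨N, by omega, le_rfl, le_of_eq hr.symm⟩
  obtain ⟨m, ⟨hm1, hmN, hmd⟩, hmmin⟩ :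
      ∃ m, (1 ≤ m ∧ m ≤ N ∧ u m ≤ u (m + 1)) ∧
        ∀ i, i < m → ¬ (1 ≤ i ∧ i ≤ N ∧ u i ≤ u (i + 1)) :=
    ⟨Nat.find hQex, Nat.find_spec hQex, fun i hi => Nat.find_min hQex hi⟩
  have hdec : ∀ i, 1 ≤ i → i < m → u (i + 1) < u i := by
    intro i h1 him
    have hni := hmmin i him
    push_neg at hni
    exact hni h1 (by omega)
  have hmono : ∀ a b : ℕ, 1 ≤ a → a ≤ b → b ≤ m → u b ≤ u a := by
    intro a b h1 hab hbm
    induction b, hab using Nat.le_induction with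
    | base => exact le_refl _
    | succ b hb ih =>
      have h2 := hdec b (by omega) (by omega)
      have h3 := ih (by omega)
      linarith
  -- K + 1 ≤ m
  have hKm : K + 1 ≤ m := by
    by_contra hcon
    push_neg at hcon
    have hmK : m ≤ K := by omega
    have hupos : ∀ j : ℕ, 1 ≤ j → j ≤ m → 0 < u j := by
      intro j h1 hj
      apply hpos
      have h5 : (j : ℝ) ≤ (K : ℝ) := by exact_mod_cast le_trans hj hmK
      linarith
    have hex : ∃ j, 1 ≤ j ∧ j ≤ m ∧ c j < 0 := by
      by_contra hall
      push_neg at hall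
      have dall : ∀ j, 1 ≤ j → j ≤ m → u (j + 1) < u j := by
        intro j
        induction j with
        | zero => intro h1 _; exact absurd h1 (by omega)
        | succ n ih =>
          intro h1 h2
          by_cases hn : n = 0
          · subst hn
            have hd1 := hd 1 le_rfl (by omega)
            have hm1' : 0 < c 1 * u 1 := mul_pos hc1 hu1
            norm_num at hd1
            linarith [hd1, hl]
          · have hprev := ih (by omega) (by omega)
            have hdn := hd (n + 1) (by omega) (by omega : n + 1 ≤ N)
            rw [show n + 1 - 1 = n from by omega] at hdn
            have h0 : 0 ≤ c (n + 1) := hall (n + 1) (by omega) h2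
            have hup : 0 < u (n + 1) := hupos (n + 1) (by omega) h2
            nlinarith
      exact absurd hmd (not_le.mpr (dall m hm1 le_rfl))
    obtain ⟨j0, hj01, hj0m, hj0c⟩ := hex
    have chain : ∀ i : ℕ, m + 1 ≤ i → i ≤ N → 0 < u i ∧ u i < u (i + 1) := by
      intro i hi1
      induction i, hi1 using Nat.le_induction with
      | base =>
        intro hi2
        have hum1 : 0 < u (m + 1) := lt_of_lt_of_le (hupos m hm1 le_rfl) hmd
        refine ⟨hum1, ?_⟩
        have hdm := hd (m + 1) (by omega) hi2
        rw [show m + 1 - 1 = m from by omega] at hdm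
        have hcm : c (m + 1) < 0 := lt_of_le_of_lt (hc j0 (m + 1) (by omega)) hj0c
        nlinarith [mul_pos (neg_pos.mpr hcm) hum1]
      | succ i hi ih =>
        intro hi2
        obtain ⟨hpi, hlt⟩ := ih (by omega)
        have hup : 0 < u (i + 1) := lt_trans hpi hlt
        refine ⟨hup, ?_⟩
        have hdi := hd (i + 1) (by omega) hi2
        rw [show i + 1 - 1 = i from by omega] at hdi
        have hci : c (i + 1) < 0 := lt_of_le_of_lt (hc j0 (i + 1) (by omega)) hj0c
        nlinarith [mul_pos (neg_pos.mpr hci) hup]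
    have hfin := (chain N (by omega) le_rfl).2
    rw [hr] at hfin
    exact lt_irrefl _ hfin
  -- the main bound
  have hmain : 2 * x - 1 ≤ (m : ℝ) := by
    by_contra hcon
    push_neg at hcon
    have hm2K : m ≤ 2 * K := by
      have h5 : (m : ℝ) < 2 * (K:ℝ) + 1 := by linarith
      have h6 : m < 2 * K + 1 := by exact_mod_cast h5
      omega
    have Wle : ∀ j : ℕ, j ≤ m - K → u j * u (m - j) ≤ u (j + 1) * u (m + 1 - j) := by
      intro j
      induction j with
      | zero =>
        intro _
        norm_num
        rw [hl]
        exact mul_le_mul_of_nonneg_left hmd hu1.le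
      | succ j ih =>
        intro hj
        have ihh := ih (by omega)
        have e1 : m + 1 - j = m - j + 1 := by omega
        have e2 : m + 1 - (j + 1) = m - j := by omega
        have e3 : m - (j + 1) = m - j - 1 := by omega
        rw [e2, e3]
        rw [e1] at ihh
        have hA := hd (j + 1) (by omega) (by omega : j + 1 ≤ N)
        rw [show j + 1 - 1 = j from by omega] at hA
        have hB := hd (m - j) (by omega) (by omega)
        have hcc : 0 ≤ c (j + 1) - c (m - j) :=
          sub_nonneg.mpr (hc (j + 1) (m - j) (by omega))
        have hup : 0 < u (j + 1) := by
          apply hpos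
          have h5 : ((j + 1 : ℕ) : ℝ) ≤ (K : ℝ) := by exact_mod_cast (show j + 1 ≤ K by omega)
          linarith
        have humj : u (m - j) ≤ 0 :=
          le_trans (hmono (K + 1) (m - j) (by omega) (by omega) (by omega)) hK1neg
        have hEq : u (j + 1) * u (m - j - 1) - u (j + 1 + 1) * u (m - j) =
            (u j * u (m - j) - u (j + 1) * u (m - j + 1))
            + (c (j + 1) - c (m - j)) * (u (j + 1) * u (m - j)) := by
          linear_combination u (m - j) * hA - u (j + 1) * hB
        have hprod : 0 ≤ (c (j + 1) - c (m - j)) * (u (j + 1) * -u (m - j)) :=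
          mul_nonneg hcc (mul_nonneg hup.le (neg_nonneg.mpr humj))
        nlinarith [hEq, ihh, hprod]
    have hWJ := Wle (m - K) le_rfl
    rw [show m - (m - K) = K from by omega, show m + 1 - (m - K) = K + 1 from by omega] at hWJ
    by_cases hJK : m - K < K
    · have h1 : 0 < u (m - K) := by
        apply hpos
        have h5 : ((m - K : ℕ) : ℝ) ≤ (K : ℝ) := by exact_mod_cast (show m - K ≤ K by omega)
        linarith
      have h2 : 0 < u (m - K + 1) := by
        apply hpos
        have h5 : ((m - K + 1 : ℕ) : ℝ) ≤ (K : ℝ) := by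
          exact_mod_cast (show m - K + 1 ≤ K by omega)
        linarith
      have h3 : 0 ≤ u (m - K + 1) * -u (K + 1) :=
        mul_nonneg h2.le (neg_nonneg.mpr hK1neg)
      nlinarith [mul_pos h1 hKpos, h3, hWJ]
    · have hJe : m - K = K := by omega
      rw [hJe] at hWJ
      have hmeq : m = 2 * K := by omega
      have hsum : u K + u (K + 1) ≤ 0 := by nlinarith [hWJ, hKpos, hK1neg]
      have hxK : (2 * (K:ℝ)) < 2 * x - 1 := by
        have h5 : (m : ℝ) = 2 * (K : ℝ) := by exact_mod_cast congrArg (Nat.cast : ℕ → ℝ) hmeq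
        linarith
      nlinarith [hKnode, hKpos,
        mul_nonneg (show (0:ℝ) ≤ x - (K:ℝ) from by linarith)
          (show (0:ℝ) ≤ -(u K + u (K + 1)) from by linarith),
        mul_pos hKpos (show (0:ℝ) < 2 * x - 2 * (K:ℝ) - 1 from by linarith)]
  exact ⟨m, hm1, hmN, hmain, fun i h1 h2 => (hdec i h1 (by omega)).le⟩

/-- with `x` the first node of the `u(λ₂)`-line of `H_{αU}(P_N)` (`α ≥ 0`,
`u 1 > 0`), there is `m ∈ {1,…,N}` with `m ≥ 2x - 1` such that the sequence is
decreasing on `{1,…,m}`: `u (i+1) ≤ u i` for `1 ≤ i ≤ m - 1`. -/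
theorem path_decreasing_symmetric_region (N : ℕ) (hN : 2 ≤ N) (α : ℝ) (hα : 0 ≤ α)
    (l1 l2 : ℝ)
    (h : TwoSmallest (pathH N (fun i => α * ((i : ℝ) - 1))) l1 l2)
    (u : ℕ → ℝ)
    (hue : (pathH N (fun i => α * ((i : ℝ) - 1))).mulVec
        (fun i : Fin N => u ((i : ℕ) + 1)) = l2 • fun i : Fin N => u ((i : ℕ) + 1))
    (hun : ∑ i ∈ Finset.Icc 1 N, u i ^ 2 = 1)
    (hu1 : 0 < u 1) (hl : u 0 = u 1) (hr : u (N + 1) = u N)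
    (x : ℝ) (hx : IsNodeOf N u x) (hxfirst : ∀ y : ℝ, IsNodeOf N u y → x ≤ y) :
    ∃ m : ℕ, 1 ≤ m ∧ m ≤ N ∧ 2 * x - 1 ≤ (m : ℝ) ∧
      ∀ i : ℕ, 1 ≤ i → i + 1 ≤ m → u (i + 1) ≤ u i := by
  have hrec := path_rec N hN α l2 u hue hl hr
  refine key N hN (fun j => l2 - α * ((j : ℝ) - 1)) ?_ u hrec hu1 hl hr x hx hxfirst
  intro j k hjk
  have hcast : (j : ℝ) ≤ (k : ℝ) := by exact_mod_cast hjk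
  have hmul := mul_le_mul_of_nonneg_left (show (j : ℝ) - 1 ≤ (k : ℝ) - 1 by linarith) hα
  linarith
end
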